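/- arXiv:1907.06237 — 3 statements merged into one kernel-verified Lean document; each statement's English description precedes it below -/
import Mathlib

section
/- Let X be a separable real Banach space, let μ and ν be Borel probability measures on X, and suppose μ is Fomin differentiable along a vector v ∈ X with logarithmic derivative β_v^μ ∈ L¹(X,μ), i.e. ∫_X (∂f/∂v) dμ = −∫_X β_v^μ f dμ for all f ∈ C¹_b(X). Then the convolution μ ∗ ν is Fomin differentiable along v, and ‖β_v^{μ∗ν}‖_{L¹(X, μ∗ν)} ≤ ‖β_v^μ‖_{L¹(X,μ)}. -/
open MeasureTheory
open scoped NNReal ENNReal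

/-- `β` is the Fomin (logarithmic) derivative of the probability measure `μ` along `v`:
the integration-by-parts identity holds against all bounded `C¹` functions with bounded
derivative. -/
def IsFominDeriv {X : Type*} [NormedAddCommGroup X] [NormedSpace ℝ X]
    [MeasurableSpace X] (μ : Measure X) (v : X) (β : X → ℝ) : Prop :=
  Integrable β μ ∧
  ∀ f : X → ℝ, ContDiff ℝ 1 f → (∃ C, ∀ x, |f x| ≤ C) →
    (∃ C, ∀ x, ‖fderiv ℝ f x‖ ≤ C) →
    ∫ x, fderiv ℝ f x v ∂μ = - ∫ x, β x * f x ∂μ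

/-- If `μ` is Fomin differentiable along `v`, then so is `μ ∗ ν`,
and the `L¹` norm of the logarithmic derivative does not increase. -/
theorem statement3 {X : Type*} [NormedAddCommGroup X] [NormedSpace ℝ X]
    [MeasurableSpace X] [BorelSpace X] [SecondCountableTopology X]
    (μ ν : Measure X) [IsProbabilityMeasure μ] [IsProbabilityMeasure ν]
    (v : X) (β : X → ℝ) (hβ : IsFominDeriv μ v β) :
    ∃ βc : X → ℝ,
      IsFominDeriv (Measure.map (fun p : X × X => p.1 + p.2) (μ.prod ν)) v βc ∧
      ∫ z, |βc z| ∂(Measure.map (fun p : X × X => p.1 + p.2) (μ.prod ν)) ≤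
        ∫ x, |β x| ∂μ := by
  obtain ⟨hβi, hβib⟩ := hβ
  set Ad : X × X → X := fun p => p.1 + p.2 with hAd_def
  have hAd : Measurable Ad := measurable_fst.add measurable_snd
  have hAdc : Continuous Ad := continuous_fst.add continuous_snd
  set π : Measure (X × X) := μ.prod ν with hπ_def
  set κ : Measure X := Measure.map Ad π with hκ_def
  -- positive/negative parts of β, as ℝ≥0-valued densities on the product.
  set bp : X × X → ℝ≥0 := fun p => (β p.1).toNNReal with hbp_def
  set bm : X × X → ℝ≥0 := fun p => (-β p.1).toNNReal with hbm_def
  -- β ∘ fst is integrable / ae-measurable on the product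
  have hmapfst : Measure.map Prod.fst π = μ := by
    rw [hπ_def, Measure.map_fst_prod, measure_univ, one_smul]
  have hβπ : Integrable (fun p : X × X => β p.1) π := by
    have h0 : Integrable β (Measure.map Prod.fst π) := hmapfst ▸ hβi
    exact (integrable_map_measure (hmapfst ▸ hβi.1) measurable_fst.aemeasurable).1 h0
  have hbp_ae : AEMeasurable bp π := hβπ.aemeasurable.real_toNNReal
  have hbm_ae : AEMeasurable bm π := hβπ.neg.aemeasurable.real_toNNReal
  -- the two density measures on the product and their pushforwards
  set ρp : Measure (X × X) := π.withDensity (fun p => (bp p : ℝ≥0∞)) with hρp_def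
  set ρm : Measure (X × X) := π.withDensity (fun p => (bm p : ℝ≥0∞)) with hρm_def
  haveI hρp_fin : IsFiniteMeasure ρp :=
    isFiniteMeasure_withDensity_ofReal (f := fun p : X × X => β p.1) hβπ.2
  haveI hρm_fin : IsFiniteMeasure ρm :=
    isFiniteMeasure_withDensity_ofReal (f := fun p : X × X => -β p.1) hβπ.neg.2
  set σp : Measure X := ρp.map Ad with hσp_def
  set σm : Measure X := ρm.map Ad with hσm_def
  haveI hσp_fin : IsFiniteMeasure σp := Measure.isFiniteMeasure_map ρp Ad
  haveI hσm_fin : IsFiniteMeasure σm := Measure.isFiniteMeasure_map ρm Ad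
  have hacp : σp ≪ κ := (withDensity_absolutelyContinuous π _).map hAd
  have hacm : σm ≪ κ := (withDensity_absolutelyContinuous π _).map hAd
  haveI : IsProbabilityMeasure κ := Measure.isProbabilityMeasure_map hAd.aemeasurable
  -- the candidate logarithmic derivative
  set βc : X → ℝ := fun z => (σp.rnDeriv κ z).toReal - (σm.rnDeriv κ z).toReal with hβc_def
  have hβc_int : Integrable βc κ :=
    Measure.integrable_toReal_rnDeriv.sub Measure.integrable_toReal_rnDeriv
  -- pointwise: (bp:ℝ) - (bm:ℝ) = β ∘ fst
  have hbpm : ∀ p : X × X, ((bp p : ℝ) - (bm p : ℝ)) = β p.1 := by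
    intro p
    simp only [hbp_def, hbm_def, Real.coe_toNNReal']
    exact max_zero_sub_max_neg_zero_eq_self _
  have hbp_le : ∀ p : X × X, (bp p : ℝ) ≤ |β p.1| := by
    intro p
    simp only [hbp_def, Real.coe_toNNReal']
    exact max_le (le_abs_self _) (abs_nonneg _)
  have hbm_le : ∀ p : X × X, (bm p : ℝ) ≤ |β p.1| := by
    intro p
    simp only [hbm_def, Real.coe_toNNReal']
    refine max_le ?_ (abs_nonneg _)
    rw [← abs_neg]; exact le_abs_self _
  have hbp_int : Integrable (fun p : X × X => (bp p : ℝ)) π := by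
    refine hβπ.abs.mono hbp_ae.coe_nnreal_real.aestronglyMeasurable ?_
    refine Filter.Eventually.of_forall fun p => ?_
    rw [Real.norm_eq_abs, Real.norm_eq_abs, abs_abs,
      abs_of_nonneg (NNReal.coe_nonneg _)]
    exact hbp_le p
  have hbm_int : Integrable (fun p : X × X => (bm p : ℝ)) π := by
    refine hβπ.abs.mono hbm_ae.coe_nnreal_real.aestronglyMeasurable ?_
    refine Filter.Eventually.of_forall fun p => ?_
    rw [Real.norm_eq_abs, Real.norm_eq_abs, abs_abs,
      abs_of_nonneg (NNReal.coe_nonneg _)]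
    exact hbm_le p
  -- Key identity: integrating βc against a bounded measurable g
  have key : ∀ g : X → ℝ, AEStronglyMeasurable g κ → (∃ C, ∀ x, |g x| ≤ C) →
      ∫ z, βc z * g z ∂κ = ∫ p, β p.1 * g (Ad p) ∂π := by
    intro g hg ⟨C, hC⟩
    have hgb' : ∀ᵐ z ∂κ, ‖g z‖ ≤ C :=
      Filter.Eventually.of_forall fun z => by simpa [Real.norm_eq_abs] using hC z
    have hintp : Integrable (fun z => (σp.rnDeriv κ z).toReal * g z) κ :=
      (Measure.integrable_toReal_rnDeriv.bdd_mul (c := C) hg hgb').congr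
        (Filter.Eventually.of_forall fun z => mul_comm _ _)
    have hintm : Integrable (fun z => (σm.rnDeriv κ z).toReal * g z) κ :=
      (Measure.integrable_toReal_rnDeriv.bdd_mul (c := C) hg hgb').congr
        (Filter.Eventually.of_forall fun z => mul_comm _ _)
    have h1 : ∫ z, βc z * g z ∂κ
        = (∫ z, (σp.rnDeriv κ z).toReal * g z ∂κ)
          - ∫ z, (σm.rnDeriv κ z).toReal * g z ∂κ := by
      rw [← integral_sub hintp hintm]
      congr 1 with z
      simp [hβc_def, sub_mul]
    have h2p : ∫ z, (σp.rnDeriv κ z).toReal * g z ∂κ = ∫ z, g z ∂σp := by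
      simpa [smul_eq_mul] using integral_rnDeriv_smul (f := g) hacp
    have h2m : ∫ z, (σm.rnDeriv κ z).toReal * g z ∂κ = ∫ z, g z ∂σm := by
      simpa [smul_eq_mul] using integral_rnDeriv_smul (f := g) hacm
    have h3p : ∫ z, g z ∂σp = ∫ p, ((bp p : ℝ)) * g (Ad p) ∂π := by
      rw [hσp_def, integral_map hAd.aemeasurable (hg.mono_ac hacp)]
      rw [hρp_def]
      simpa [smul_eq_mul, NNReal.smul_def] using
        integral_withDensity_eq_integral_smul₀ hbp_ae (fun p => g (Ad p))
    have h3m : ∫ z, g z ∂σm = ∫ p, ((bm p : ℝ)) * g (Ad p) ∂π := by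
      rw [hσm_def, integral_map hAd.aemeasurable (hg.mono_ac hacm)]
      rw [hρm_def]
      simpa [smul_eq_mul, NNReal.smul_def] using
        integral_withDensity_eq_integral_smul₀ hbm_ae (fun p => g (Ad p))
    have hgAd : AEStronglyMeasurable (fun p => g (Ad p)) π :=
      hg.comp_aemeasurable hAd.aemeasurable
    have hgAdb : ∀ᵐ p ∂π, ‖g (Ad p)‖ ≤ C :=
      Filter.Eventually.of_forall fun p => by simpa [Real.norm_eq_abs] using hC (Ad p)
    have hintbp : Integrable (fun p => ((bp p : ℝ)) * g (Ad p)) π :=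
      (hbp_int.bdd_mul hgAd hgAdb).congr
        (Filter.Eventually.of_forall fun p => mul_comm _ _)
    have hintbm : Integrable (fun p => ((bm p : ℝ)) * g (Ad p)) π :=
      (hbm_int.bdd_mul hgAd hgAdb).congr
        (Filter.Eventually.of_forall fun p => mul_comm _ _)
    rw [h1, h2p, h2m, h3p, h3m, ← integral_sub hintbp hintbm]
    congr 1 with p
    rw [← sub_mul, hbpm p]
  -- total masses of σp, σm
  have hmassp : σp Set.univ = ∫⁻ x, ENNReal.ofReal (β x) ∂μ := by
    rw [hσp_def, Measure.map_apply hAd MeasurableSet.univ, Set.preimage_univ,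
      hρp_def, withDensity_apply _ MeasurableSet.univ, setLIntegral_univ]
    calc ∫⁻ p, (bp p : ℝ≥0∞) ∂π
        = ∫⁻ p, (fun x => ENNReal.ofReal (β x)) p.1 ∂π :=
          lintegral_congr fun p => by simp [hbp_def, ENNReal.ofReal]
      _ = ∫⁻ x, ENNReal.ofReal (β x) ∂(Measure.map Prod.fst π) :=
          (lintegral_map' (hmapfst ▸ hβi.1.aemeasurable).ennreal_ofReal
            measurable_fst.aemeasurable).symm
      _ = ∫⁻ x, ENNReal.ofReal (β x) ∂μ := by rw [hmapfst]
  have hmassm : σm Set.univ = ∫⁻ x, ENNReal.ofReal (-β x) ∂μ := by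
    rw [hσm_def, Measure.map_apply hAd MeasurableSet.univ, Set.preimage_univ,
      hρm_def, withDensity_apply _ MeasurableSet.univ, setLIntegral_univ]
    calc ∫⁻ p, (bm p : ℝ≥0∞) ∂π
        = ∫⁻ p, (fun x => ENNReal.ofReal (-β x)) p.1 ∂π :=
          lintegral_congr fun p => by simp [hbm_def, ENNReal.ofReal]
      _ = ∫⁻ x, ENNReal.ofReal (-β x) ∂(Measure.map Prod.fst π) :=
          (lintegral_map' (hmapfst ▸ hβi.1.aemeasurable).neg.ennreal_ofReal
            measurable_fst.aemeasurable).symm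
      _ = ∫⁻ x, ENNReal.ofReal (-β x) ∂μ := by rw [hmapfst]
  refine ⟨βc, ⟨hβc_int, ?_⟩, ?_⟩
  · -- integration by parts for the convolution
    intro f hf hfb hfd
    obtain ⟨Cf, hCf⟩ := hfb
    obtain ⟨Cd, hCd⟩ := hfd
    have hf_cont : Continuous f := hf.continuous
    have hdf_cont : Continuous fun z => fderiv ℝ f z v :=
      ((ContinuousLinearMap.apply ℝ ℝ v).continuous).comp (hf.continuous_fderiv one_ne_zero)
    have hdf_bd : ∀ z, |fderiv ℝ f z v| ≤ Cd * ‖v‖ := fun z => by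
      calc |fderiv ℝ f z v| = ‖fderiv ℝ f z v‖ := rfl
        _ ≤ ‖fderiv ℝ f z‖ * ‖v‖ := (fderiv ℝ f z).le_opNorm v
        _ ≤ Cd * ‖v‖ := by
            exact mul_le_mul_of_nonneg_right (hCd z) (norm_nonneg v)
    -- move to the product space
    have hL : ∫ z, fderiv ℝ f z v ∂κ = ∫ p, fderiv ℝ f (Ad p) v ∂π := by
      rw [hκ_def, integral_map hAd.aemeasurable hdf_cont.aestronglyMeasurable]
    have hint_dAd : Integrable (fun p => fderiv ℝ f (Ad p) v) π :=
      ⟨(hdf_cont.comp hAdc).aestronglyMeasurable,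
        HasFiniteIntegral.of_bounded (C := Cd * ‖v‖)
          (Filter.Eventually.of_forall fun p => by
            simpa [Real.norm_eq_abs] using hdf_bd (Ad p))⟩
    -- integration by parts for each translate
    have hy : ∀ y : X, ∫ x, fderiv ℝ f (x + y) v ∂μ = - ∫ x, β x * f (x + y) ∂μ := by
      intro y
      set g : X → ℝ := fun x => f (x + y) with hg_def
      have hgC : ContDiff ℝ 1 g := hf.comp (contDiff_id.add contDiff_const)
      have hfderiv : ∀ x, fderiv ℝ g x = fderiv ℝ f (x + y) := by
        intro x
        have h1 : HasFDerivAt f (fderiv ℝ f (x + y)) (x + y) :=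
          ((hf.differentiable one_ne_zero) (x + y)).hasFDerivAt
        have h2 : HasFDerivAt (fun x : X => x + y) (ContinuousLinearMap.id ℝ X) x :=
          (hasFDerivAt_id x).add_const y
        have h3 := h1.comp x h2
        rw [hg_def]
        simpa [Function.comp_def] using h3.fderiv
      have := hβib g hgC ⟨Cf, fun x => hCf _⟩
        ⟨Cd, fun x => by rw [hfderiv]; exact hCd _⟩
      calc ∫ x, fderiv ℝ f (x + y) v ∂μ = ∫ x, fderiv ℝ g x v ∂μ := by
            simp_rw [hfderiv]
        _ = - ∫ x, β x * g x ∂μ := this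
    -- β ∘ fst times f ∘ Ad is integrable on the product
    have hintβf : Integrable (fun p => β p.1 * f (Ad p)) π := by
      have hfAd : AEStronglyMeasurable (fun p => f (Ad p)) π :=
        (hf_cont.comp hAdc).aestronglyMeasurable
      exact (hβπ.bdd_mul hfAd (Filter.Eventually.of_forall fun p => by
        simpa [Real.norm_eq_abs] using hCf (Ad p))).congr
        (Filter.Eventually.of_forall fun p => mul_comm _ _)
    have hR : ∫ p, β p.1 * f (Ad p) ∂π = ∫ z, βc z * f z ∂κ :=
      (key f hf_cont.aestronglyMeasurable ⟨Cf, hCf⟩).symm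
    calc ∫ z, fderiv ℝ f z v ∂κ = ∫ p, fderiv ℝ f (Ad p) v ∂π := hL
      _ = ∫ y, ∫ x, fderiv ℝ f (x + y) v ∂μ ∂ν := by
          simpa using integral_prod_symm (fun p : X × X => fderiv ℝ f (Ad p) v) hint_dAd
      _ = ∫ y, - ∫ x, β x * f (x + y) ∂μ ∂ν := by
          refine integral_congr_ae (Filter.Eventually.of_forall fun y => hy y)
      _ = - ∫ y, ∫ x, β x * f (x + y) ∂μ ∂ν := integral_neg _
      _ = - ∫ p, β p.1 * f (Ad p) ∂π := by
          rw [integral_prod_symm (fun p : X × X => β p.1 * f (Ad p)) hintβf]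
      _ = - ∫ z, βc z * f z ∂κ := by rw [hR]
  · -- the L¹ estimate
    have h1 : ∫ z, |βc z| ∂κ
        ≤ ∫ z, ((σp.rnDeriv κ z).toReal + (σm.rnDeriv κ z).toReal) ∂κ := by
      refine integral_mono hβc_int.abs
        (Measure.integrable_toReal_rnDeriv.add Measure.integrable_toReal_rnDeriv) ?_
      intro z
      calc |βc z| ≤ |(σp.rnDeriv κ z).toReal| + |(σm.rnDeriv κ z).toReal| := abs_sub _ _
        _ = (σp.rnDeriv κ z).toReal + (σm.rnDeriv κ z).toReal := by
            rw [abs_of_nonneg ENNReal.toReal_nonneg, abs_of_nonneg ENNReal.toReal_nonneg]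
    have h2 : ∫ z, ((σp.rnDeriv κ z).toReal + (σm.rnDeriv κ z).toReal) ∂κ
        = (σp Set.univ).toReal + (σm Set.univ).toReal := by
      rw [integral_add Measure.integrable_toReal_rnDeriv Measure.integrable_toReal_rnDeriv,
        Measure.integral_toReal_rnDeriv hacp, Measure.integral_toReal_rnDeriv hacm]
      rfl
    have hfinp : ∫⁻ x, ENNReal.ofReal (β x) ∂μ ≠ ⊤ := by
      rw [← hmassp]; exact measure_ne_top σp _
    have hfinm : ∫⁻ x, ENNReal.ofReal (-β x) ∂μ ≠ ⊤ := by
      rw [← hmassm]; exact measure_ne_top σm _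
    have h3 : (σp Set.univ).toReal + (σm Set.univ).toReal = ∫ x, |β x| ∂μ := by
      rw [hmassp, hmassm, ← ENNReal.toReal_add hfinp hfinm,
        ← lintegral_add_left' hβi.1.aemeasurable.ennreal_ofReal]
      rw [integral_eq_lintegral_of_nonneg_ae
        (Filter.Eventually.of_forall fun x => abs_nonneg (β x)) hβi.abs.1]
      congr 1
      refine lintegral_congr fun x => ?_
      rcases le_total 0 (β x) with h | h
      · rw [abs_of_nonneg h, ENNReal.ofReal_of_nonpos (neg_nonpos.mpr h), add_zero]
      · rw [abs_of_nonpos h, ENNReal.ofReal_of_nonpos h, zero_add]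
    calc ∫ z, |βc z| ∂κ ≤ _ := h1
      _ = _ := h2
      _ = ∫ x, |β x| ∂μ := h3
end

section
/- Let X be a separable Banach space, H ⊂ X a Banach space with T_t(H) ⊂ H, and let P_t f(x) = ∫_X f(T_t x + y) μ_t(dy) be a generalized Mehler semigroup such that each μ_t is Fomin differentiable along T_t h for all h ∈ H, with ‖β_{T_t h}^{μ_t}‖_{L¹(X,μ_t)} ≤ C e^{ωt} t^{-θ} ‖h‖_H. Then for every bounded Borel g : X → ℝ, t > 0, x ∈ X and h ∈ H, the function P_t g is differentiable along h at x, and ∂(P_t g)/∂h (x) = −∫_X g(T_t x + y) β_{T_t h}^{μ_t}(y) μ_t(dy); in particular |∂(P_t g)/∂h (x)| ≤ C e^{ωt} t^{-θ} ‖h‖_H ‖g‖_∞. -/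
set_option linter.unusedSectionVars false
set_option linter.unusedVariables false

open MeasureTheory Set Filter Topology

section NiceClass

variable {X : Type*} [NormedAddCommGroup X] [NormedSpace ℝ X]

/-- Test function class: C¹, bounded, bounded derivative. -/
def NiceFun (f : X → ℝ) : Prop :=
  ContDiff ℝ 1 f ∧ (∃ C, ∀ x, |f x| ≤ C) ∧ (∃ C, ∀ x, ‖fderiv ℝ f x‖ ≤ C)

lemma niceFun_const (c : ℝ) : NiceFun (fun _ : X => c) := by
  refine ⟨contDiff_const, ⟨|c|, fun x => le_rfl⟩, ⟨0, fun x => ?_⟩⟩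
  simp [fderiv_const]

lemma NiceFun.mul {f g : X → ℝ} (hf : NiceFun f) (hg : NiceFun g) : NiceFun (fun x => f x * g x) := by
  obtain ⟨hf1, ⟨Cf, hCf⟩, ⟨Mf, hMf⟩⟩ := hf
  obtain ⟨hg1, ⟨Cg, hCg⟩, ⟨Mg, hMg⟩⟩ := hg
  refine ⟨hf1.mul hg1, ⟨Cf * Cg, fun x => ?_⟩, ⟨Cf * Mg + Cg * Mf, fun x => ?_⟩⟩
  · rw [abs_mul]
    have h0f : (0:ℝ) ≤ Cf := le_trans (abs_nonneg _) (hCf x)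
    exact mul_le_mul (hCf x) (hCg x) (abs_nonneg _) h0f
  · have h0f : (0:ℝ) ≤ Cf := le_trans (abs_nonneg _) (hCf x)
    have h0g : (0:ℝ) ≤ Cg := le_trans (abs_nonneg _) (hCg x)
    rw [fderiv_fun_mul (hf1.differentiable one_ne_zero x)
      (hg1.differentiable one_ne_zero x)]
    refine (norm_add_le _ _).trans ?_
    gcongr
    · calc ‖f x • fderiv ℝ g x‖ = |f x| * ‖fderiv ℝ g x‖ := by
            rw [norm_smul]; rfl
        _ ≤ Cf * Mg := mul_le_mul (hCf x) (hMg x) (norm_nonneg _) h0f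
    · calc ‖g x • fderiv ℝ f x‖ = |g x| * ‖fderiv ℝ f x‖ := by
            rw [norm_smul]; rfl
        _ ≤ Cg * Mf := mul_le_mul (hCg x) (hMf x) (norm_nonneg _) h0g

/-- bound for the derivative of `Real.smoothTransition`. -/
lemma smoothTransition_deriv_bound : ∃ B : ℝ, ∀ x, |deriv Real.smoothTransition x| ≤ B := by
  have hc : Continuous (deriv Real.smoothTransition) :=
    (Real.smoothTransition.contDiff (n := 1)).continuous_deriv le_rfl
  obtain ⟨B, hB⟩ := (isCompact_Icc (a := (0:ℝ)) (b := 1)).exists_bound_of_continuousOn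
    (hc.continuousOn)
  refine ⟨max B 0, fun x => ?_⟩
  rcases le_or_gt x 0 with hx | hx
  · rcases eq_or_lt_of_le hx with rfl | hx'
    · exact (le_max_left _ _).trans' (by simpa using hB 0 (by simp))
    · have : deriv Real.smoothTransition x = 0 := by
        have hev : Real.smoothTransition =ᶠ[𝓝 x] fun _ => (0:ℝ) := by
          filter_upwards [Iio_mem_nhds hx'] with y hy
          exact Real.smoothTransition.zero_of_nonpos (le_of_lt hy)
        rw [hev.deriv_eq]; simp
      simp [this]
  · rcases le_or_gt x 1 with hx1 | hx1
    · exact (le_max_left _ _).trans' (hB x ⟨hx.le, hx1⟩)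
    · have : deriv Real.smoothTransition x = 0 := by
        have hev : Real.smoothTransition =ᶠ[𝓝 x] fun _ => (1:ℝ) := by
          filter_upwards [Ioi_mem_nhds hx1] with y hy
          exact Real.smoothTransition.one_of_one_le (le_of_lt hy)
        rw [hev.deriv_eq]; simp
      simp [this]

/-- A smooth cylinder factor is a nice function. -/
lemma niceFun_factor (ℓ : X →L[ℝ] ℝ) (n : ℕ) (c : ℝ) :
    NiceFun (fun x => Real.smoothTransition ((n:ℝ) * (c - ℓ x) + 1)) := by
  obtain ⟨B, hB⟩ := smoothTransition_deriv_bound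
  have hB0 : 0 ≤ B := le_trans (abs_nonneg _) (hB 0)
  set η := Real.smoothTransition
  have hA : ∀ x : X, HasFDerivAt (fun x => η ((n:ℝ) * (c - ℓ x) + 1))
      ((deriv η ((n:ℝ) * (c - ℓ x) + 1) * (-(n:ℝ))) • (ℓ : X →L[ℝ] ℝ)) x := by
    intro x
    have h1 : HasDerivAt (fun r : ℝ => (n:ℝ) * (c - r) + 1) (-(n:ℝ)) (ℓ x) := by
      have : HasDerivAt (fun r : ℝ => (n:ℝ) * (c - r) + 1) ((n:ℝ) * (0 - 1)) (ℓ x) :=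
        (((hasDerivAt_const _ c).sub (hasDerivAt_id _)).const_mul _).add_const 1
      simpa using this
    have h2 : HasDerivAt η (deriv η ((n:ℝ) * (c - ℓ x) + 1)) ((n:ℝ) * (c - ℓ x) + 1) :=
      (((Real.smoothTransition.contDiff (n := 1)).differentiable (by simp)) _).hasDerivAt
    exact (h2.comp (ℓ x) h1).comp_hasFDerivAt x (ℓ.hasFDerivAt)
  refine ⟨?_, ⟨1, fun x => ?_⟩, ⟨B * n * ‖ℓ‖, fun x => ?_⟩⟩
  · exact (Real.smoothTransition.contDiff).comp
      ((contDiff_const.mul (contDiff_const.sub ℓ.contDiff)).add contDiff_const)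
  · rw [abs_le]
    exact ⟨by linarith [Real.smoothTransition.nonneg ((n:ℝ) * (c - ℓ x) + 1)],
      Real.smoothTransition.le_one _⟩
  · rw [(hA x).fderiv]
    rw [norm_smul]
    calc ‖deriv η ((n:ℝ) * (c - ℓ x) + 1) * (-(n:ℝ))‖ * ‖(ℓ : X →L[ℝ] ℝ)‖
        ≤ (B * n) * ‖(ℓ : X →L[ℝ] ℝ)‖ := by
          gcongr
          rw [norm_mul]
          simp only [norm_neg, Real.norm_natCast]
          exact mul_le_mul_of_nonneg_right (hB _) (Nat.cast_nonneg n)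
      _ = B * n * ‖ℓ‖ := by ring
end NiceClass


section Norming

variable {X : Type*} [NormedAddCommGroup X] [NormedSpace ℝ X]

/-- A countable norming family of functionals on a separable normed space. -/
lemma exists_norming_family [TopologicalSpace.SeparableSpace X] :
    ∃ L : ℕ → X →L[ℝ] ℝ, ∀ (y : X) (r : ℝ), (∀ k, L k y ≤ r) ↔ ‖y‖ ≤ r := by
  have : Nonempty X := ⟨0⟩
  set d := TopologicalSpace.denseSeq X
  have hd : DenseRange d := TopologicalSpace.denseRange_denseSeq X
  have hL : ∀ k : ℕ, ∃ ℓ : X →L[ℝ] ℝ, ‖ℓ‖ ≤ 1 ∧ ℓ (d k) = ‖d k‖ := by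
    intro k
    rcases eq_or_ne (d k) 0 with h | h
    · exact ⟨0, by simp, by simp [h]⟩
    · obtain ⟨g, hg1, hg2⟩ := exists_dual_vector ℝ (d k) (norm_ne_zero_iff.2 h)
      exact ⟨g, le_of_eq hg1, by simpa using hg2⟩
  choose L hL1 hL2 using hL
  refine ⟨L, fun y r => ⟨fun h => ?_, fun h k => ?_⟩⟩
  · by_contra hr
    push_neg at hr
    rcases eq_or_ne y 0 with rfl | hy
    · have := h 0
      simp only [map_zero] at this
      simp only [norm_zero] at hr
      linarith
    · have hy0 : 0 < ‖y‖ := norm_pos_iff.2 hy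
      set ε : ℝ := min ((‖y‖ - r) / 3) (‖y‖ / 2) with hε
      have hε0 : 0 < ε := lt_min (by linarith) (by linarith)
      obtain ⟨k, hk⟩ := hd.exists_dist_lt y hε0
      rw [dist_comm, dist_eq_norm] at hk
      -- ‖d k - y‖ < ε
      have h1 : ‖y‖ - ε ≤ ‖d k‖ := by
        have := norm_sub_norm_le (d k) y
        have h2 : ‖d k‖ ≥ ‖y‖ - ‖d k - y‖ := by
          have := norm_sub_norm_le y (d k)
          rw [norm_sub_rev] at this
          linarith [abs_le.1 (abs_norm_sub_norm_le y (d k))]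
        linarith
      have hLk : L k y = L k (d k) + L k (y - d k) := by
        rw [← map_add]; congr 1; abel
      have h3 : L k (y - d k) ≥ -ε := by
        have habs : |L k (y - d k)| ≤ ‖y - d k‖ := by
          calc |L k (y - d k)| ≤ ‖L k‖ * ‖y - d k‖ := (L k).le_opNorm _
            _ ≤ 1 * ‖y - d k‖ := by
                exact mul_le_mul_of_nonneg_right (hL1 k) (norm_nonneg _)
            _ = ‖y - d k‖ := one_mul _
        have : ‖y - d k‖ < ε := by rwa [norm_sub_rev]
        linarith [abs_le.1 habs]
      have h4 : L k y ≥ ‖y‖ - 2 * ε := by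
        rw [hLk, hL2 k]
        linarith
      have h5 : ε ≤ (‖y‖ - r) / 3 := min_le_left _ _
      have := h k
      linarith
  · calc L k y ≤ |L k y| := le_abs_self _
      _ ≤ ‖L k‖ * ‖y‖ := (L k).le_opNorm _
      _ ≤ 1 * ‖y‖ := mul_le_mul_of_nonneg_right (hL1 k) (norm_nonneg _)
      _ ≤ r := by rw [one_mul]; exact h

/-- The π-system of finite intersections of closed half-spaces from the family `L`. -/
def halfSpaceSystem (L : ℕ → X →L[ℝ] ℝ) : Set (Set X) :=
  {A | ∃ l : List (ℕ × ℝ), A = {x | ∀ p ∈ l, L p.1 x ≤ p.2}}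

lemma isPiSystem_halfSpaceSystem (L : ℕ → X →L[ℝ] ℝ) : IsPiSystem (halfSpaceSystem L) := by
  rintro A ⟨l₁, rfl⟩ B ⟨l₂, rfl⟩ -
  refine ⟨l₁ ++ l₂, ?_⟩
  ext x
  simp only [mem_inter_iff, mem_setOf_eq, List.mem_append]
  constructor
  · rintro ⟨h1, h2⟩ p (hp | hp)
    exacts [h1 p hp, h2 p hp]
  · intro h
    exact ⟨fun p hp => h p (Or.inl hp), fun p hp => h p (Or.inr hp)⟩

lemma halfSpaceSystem_isClosed (L : ℕ → X →L[ℝ] ℝ) {A : Set X} (hA : A ∈ halfSpaceSystem L) :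
    IsClosed A := by
  obtain ⟨l, rfl⟩ := hA
  have : {x : X | ∀ p ∈ l, L p.1 x ≤ p.2} = ⋂ p ∈ l, {x : X | L p.1 x ≤ p.2} := by
    ext x; simp
  rw [this]
  exact isClosed_biInter fun p _ => isClosed_le (L p.1).continuous continuous_const

lemma generateFrom_halfSpaceSystem [MeasurableSpace X] [BorelSpace X]
    [SecondCountableTopology X] {L : ℕ → X →L[ℝ] ℝ}
    (hnorm : ∀ (y : X) (r : ℝ), (∀ k, L k y ≤ r) ↔ ‖y‖ ≤ r) :
    ‹MeasurableSpace X› = MeasurableSpace.generateFrom (halfSpaceSystem L) := by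
  refine le_antisymm ?_ (MeasurableSpace.generateFrom_le fun A hA =>
    (halfSpaceSystem_isClosed L hA).measurableSet)
  -- borel ≤ generateFrom
  have : Nonempty X := ⟨0⟩
  rw [BorelSpace.measurable_eq (α := X), borel]
  refine MeasurableSpace.generateFrom_le fun U hU => ?_
  -- closed balls are in the generated σ-algebra
  have hball : ∀ (a : X) (r : ℝ), MeasurableSet[MeasurableSpace.generateFrom (halfSpaceSystem L)]
      (Metric.closedBall a r) := by
    intro a r
    have : Metric.closedBall a r = ⋂ k, {x : X | L k x ≤ r + L k a} := by
      ext x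
      simp only [Metric.mem_closedBall, dist_eq_norm, mem_iInter, mem_setOf_eq]
      rw [← hnorm (x - a) r]
      constructor
      · intro h k; have := h k; rw [map_sub] at this; linarith
      · intro h k; rw [map_sub]; linarith [h k]
    rw [this]
    exact MeasurableSet.iInter fun k =>
      MeasurableSpace.measurableSet_generateFrom ⟨[(k, r + L k a)], by ext x; simp⟩
  set d := TopologicalSpace.denseSeq X
  have hd : DenseRange d := TopologicalSpace.denseRange_denseSeq X
  set S : Set (ℕ × ℚ) := {p | 0 < (p.2 : ℝ) ∧ Metric.closedBall (d p.1) (p.2 : ℝ) ⊆ U} with hS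
  have hU' : U = ⋃ p ∈ S, Metric.closedBall (d p.1) (p.2 : ℝ) := by
    ext x
    simp only [mem_iUnion, exists_prop]
    constructor
    · intro hx
      obtain ⟨ε, hε0, hεU⟩ := Metric.isOpen_iff.1 hU x hx
      obtain ⟨q, hq0, hq⟩ := exists_rat_btwn (show (0:ℝ) < ε / 3 by linarith)
      obtain ⟨j, hj⟩ := hd.exists_dist_lt x (by exact_mod_cast hq0 : (0:ℝ) < (q:ℝ))
      refine ⟨(j, q), ⟨by exact_mod_cast hq0, fun y hy => hεU ?_⟩, ?_⟩
      · rw [Metric.mem_ball]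
        calc dist y x ≤ dist y (d j) + dist (d j) x := dist_triangle _ _ _
          _ ≤ (q:ℝ) + (q:ℝ) := by
              refine add_le_add (Metric.mem_closedBall.1 hy) ?_
              rw [dist_comm]; exact hj.le
          _ < ε := by linarith
      · rw [Metric.mem_closedBall]; exact hj.le
    · rintro ⟨p, ⟨hp0, hpU⟩, hx⟩
      exact hpU hx
  rw [hU']
  exact MeasurableSet.biUnion (Set.to_countable S) fun p _ => hball _ _

end Norming

section Fomin

variable {X : Type*} [NormedAddCommGroup X] [NormedSpace ℝ X]
  [MeasurableSpace X] [BorelSpace X] [SecondCountableTopology X]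

/-- The key identity: the shifted integral is given by integrating the logarithmic derivative. -/
def PhiId (ν : Measure X) (v : X) (b : X → ℝ) (G : X → ℝ) : Prop :=
  ∀ s : ℝ, ∫ y, G (s • v + y) ∂ν =
    ∫ y, G y ∂ν - ∫ u in (0:ℝ)..s, ∫ y, G (u • v + y) * b y ∂ν

variable {ν : Measure X} [IsProbabilityMeasure ν] {v : X} {b : X → ℝ}

lemma meas_shift {G : X → ℝ} (hG : Measurable G) (u : ℝ) :
    Measurable fun y : X => G (u • v + y) :=
  hG.comp (measurable_id.const_add (u • v))

lemma int_shift {G : X → ℝ} (hG : Measurable G) {M : ℝ} (hM : ∀ x, |G x| ≤ M) (u : ℝ) :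
    Integrable (fun y : X => G (u • v + y)) ν :=
  (integrable_const M).mono' (meas_shift hG u).aestronglyMeasurable
    (Filter.Eventually.of_forall fun y => by simpa [Real.norm_eq_abs] using hM (u • v + y))

lemma int_shift_mul (hb : Integrable b ν) {G : X → ℝ} (hG : Measurable G) {M : ℝ}
    (hM : ∀ x, |G x| ≤ M) (u : ℝ) :
    Integrable (fun y : X => G (u • v + y) * b y) ν :=
  hb.bdd_mul (c := M) (meas_shift hG u).aestronglyMeasurable
    (Filter.Eventually.of_forall fun y => by simpa [Real.norm_eq_abs] using hM (u • v + y))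

lemma psi_aesm (hb : Integrable b ν) {G : X → ℝ} (hG : Measurable G) :
    AEStronglyMeasurable (fun u : ℝ => ∫ y, G (u • v + y) * b y ∂ν) (volume : Measure ℝ) := by
  have h1 : AEStronglyMeasurable (fun q : ℝ × X => G (q.1 • v + q.2) * b q.2)
      ((volume : Measure ℝ).prod ν) := by
    have hGq : Measurable fun q : ℝ × X => G (q.1 • v + q.2) :=
      hG.comp ((measurable_fst.smul_const v).add measurable_snd)
    exact hGq.aestronglyMeasurable.mul (hb.1.comp_snd)
  exact h1.integral_prod_right'

lemma psi_bound (hb : Integrable b ν) {G : X → ℝ} (hG : Measurable G) {M : ℝ}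
    (hM : ∀ x, |G x| ≤ M) (u : ℝ) :
    |∫ y, G (u • v + y) * b y ∂ν| ≤ M * ∫ y, |b y| ∂ν := by
  have h0M : 0 ≤ M := le_trans (abs_nonneg _) (hM 0)
  calc |∫ y, G (u • v + y) * b y ∂ν| ≤ ∫ y, |G (u • v + y)| * |b y| ∂ν := by
        simpa [Real.norm_eq_abs] using
          norm_integral_le_integral_norm (fun y : X => G (u • v + y) * b y) (μ := ν)
    _ ≤ ∫ y, M * |b y| ∂ν := by
        refine integral_mono ?_ (hb.abs.const_mul M) fun y => ?_
        · simpa [abs_mul] using (int_shift_mul hb hG hM u).abs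
        · exact mul_le_mul_of_nonneg_right (hM _) (abs_nonneg _)
    _ = M * ∫ y, |b y| ∂ν := integral_const_mul _ _

lemma psi_intervalIntegrable (hb : Integrable b ν) {G : X → ℝ} (hG : Measurable G) {M : ℝ}
    (hM : ∀ x, |G x| ≤ M) (a c : ℝ) :
    IntervalIntegrable (fun u : ℝ => ∫ y, G (u • v + y) * b y ∂ν) volume a c := by
  refine (intervalIntegrable_const (c := M * ∫ y, |b y| ∂ν)).mono_fun
    ((psi_aesm hb hG).restrict) (Filter.Eventually.of_forall fun u => ?_)
  simp only [Real.norm_eq_abs]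
  exact (psi_bound (v := v) hb hG hM u).trans (le_abs_self _)

lemma shift_nice {f : X → ℝ} (hf : NiceFun f) (w : X) :
    NiceFun (fun y => f (w + y)) ∧
      ∀ y, fderiv ℝ (fun y => f (w + y)) y = fderiv ℝ f (w + y) := by
  have hdf : ∀ y : X, HasFDerivAt (fun y => f (w + y)) (fderiv ℝ f (w + y)) y := by
    intro y
    have h1 : HasFDerivAt (fun y : X => w + y) (ContinuousLinearMap.id ℝ X) y :=
      (hasFDerivAt_id y).const_add w
    have h2 := (hf.1.differentiable one_ne_zero (w + y)).hasFDerivAt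
    exact h2.comp y h1
  obtain ⟨h1, ⟨C, hC⟩, ⟨M, hM⟩⟩ := hf
  refine ⟨⟨h1.comp (contDiff_const.add contDiff_id), ⟨C, fun x => hC _⟩, ⟨M, fun x => ?_⟩⟩,
    fun y => (hdf y).fderiv⟩
  rw [(hdf x).fderiv]; exact hM _

lemma hasDerivAt_integral_nice (hb : Integrable b ν)
    (hIBP : ∀ f : X → ℝ, NiceFun f → ∫ x, fderiv ℝ f x v ∂ν = - ∫ x, b x * f x ∂ν)
    {f : X → ℝ} (hf : NiceFun f) (s : ℝ) :
    HasDerivAt (fun σ : ℝ => ∫ y, f (σ • v + y) ∂ν) (-∫ y, f (s • v + y) * b y ∂ν) s := by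
  obtain ⟨hf1, ⟨Cf, hCf⟩, ⟨Mf, hMf⟩⟩ := hf
  have hcf : Continuous f := hf1.continuous
  have hfd : Continuous (fderiv ℝ f) := hf1.continuous_fderiv one_ne_zero
  have hshiftc : ∀ σ : ℝ, Continuous fun y : X => f (σ • v + y) := fun σ =>
    hcf.comp (continuous_const.add continuous_id)
  have key := hasDerivAt_integral_of_dominated_loc_of_deriv_le (μ := ν) (x₀ := s)
    (s := Metric.ball s 1) (Metric.ball_mem_nhds s one_pos)
    (F := fun σ (y : X) => f (σ • v + y)) (F' := fun σ (y : X) => fderiv ℝ f (σ • v + y) v)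
    (bound := fun _ => Mf * ‖v‖)
    (Filter.Eventually.of_forall fun σ => (hshiftc σ).aestronglyMeasurable)
    ((integrable_const Cf).mono' (hshiftc s).aestronglyMeasurable
      (Filter.Eventually.of_forall fun y => by simpa [Real.norm_eq_abs] using hCf (s • v + y)))
    (((hfd.comp (continuous_const.add continuous_id)).clm_apply
      continuous_const).aestronglyMeasurable)
    (Filter.Eventually.of_forall fun y σ _ => le_trans ((fderiv ℝ f (σ • v + y)).le_opNorm v)
      (mul_le_mul_of_nonneg_right (hMf _) (norm_nonneg v)))
    (integrable_const _)
    (Filter.Eventually.of_forall fun y σ _ => by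
      have h1 : HasDerivAt (fun σ : ℝ => σ • v + y) v σ := by
        simpa using ((hasDerivAt_id σ).smul_const v).add_const y
      exact ((hf1.differentiable one_ne_zero _).hasFDerivAt).comp_hasDerivAt σ h1)
  have hval : ∫ y, fderiv ℝ f (s • v + y) v ∂ν = -∫ y, f (s • v + y) * b y ∂ν := by
    obtain ⟨hnice, hfder⟩ := shift_nice ⟨hf1, ⟨Cf, hCf⟩, ⟨Mf, hMf⟩⟩ (s • v)
    have h2 := hIBP _ hnice
    calc ∫ y, fderiv ℝ f (s • v + y) v ∂ν
        = ∫ y, fderiv ℝ (fun y => f (s • v + y)) y v ∂ν := by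
          refine integral_congr_ae (Filter.Eventually.of_forall fun y => ?_)
          dsimp only
          rw [hfder y]
      _ = - ∫ y, b y * f (s • v + y) ∂ν := h2
      _ = - ∫ y, f (s • v + y) * b y ∂ν := by
          congr 1
          refine integral_congr_ae (Filter.Eventually.of_forall fun y => mul_comm _ _)
  rw [← hval]
  simpa using key.2

lemma phi_nice (hb : Integrable b ν)
    (hIBP : ∀ f : X → ℝ, NiceFun f → ∫ x, fderiv ℝ f x v ∂ν = - ∫ x, b x * f x ∂ν)
    {f : X → ℝ} (hf : NiceFun f) : PhiId ν v b f := by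
  intro s
  obtain ⟨hf1, ⟨Cf, hCf⟩, hMf⟩ := id hf
  have hcf : Continuous f := hf1.continuous
  set Ψ : ℝ → ℝ := fun u => ∫ y, f (u • v + y) * b y ∂ν with hΨ
  have hcont : Continuous Ψ := by
    rw [continuous_iff_continuousAt]
    intro u₀
    refine tendsto_integral_filter_of_dominated_convergence (μ := ν)
      (bound := fun y => Cf * |b y|)
      (Filter.Eventually.of_forall fun u =>
        ((hcf.comp (continuous_const.add continuous_id)).aestronglyMeasurable.mul hb.1))
      (Filter.Eventually.of_forall fun u => Filter.Eventually.of_forall fun y => ?_)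
      (hb.abs.const_mul Cf)
      (Filter.Eventually.of_forall fun y => ?_)
    · rw [Real.norm_eq_abs, abs_mul]
      exact mul_le_mul_of_nonneg_right (hCf _) (abs_nonneg _)
    · exact ((hcf.comp ((continuous_id.smul continuous_const).add
        continuous_const)).tendsto u₀).mul tendsto_const_nhds
  have hderiv : ∀ u ∈ uIcc (0:ℝ) s,
      HasDerivAt (fun σ : ℝ => ∫ y, f (σ • v + y) ∂ν) (-Ψ u) u := fun u _ =>
    hasDerivAt_integral_nice hb hIBP hf u
  have hFTC := intervalIntegral.integral_eq_sub_of_hasDerivAt hderiv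
    ((hcont.neg).intervalIntegrable 0 s)
  rw [intervalIntegral.integral_neg] at hFTC
  have h0 : ∫ y, f ((0:ℝ) • v + y) ∂ν = ∫ y, f y ∂ν := by simp
  rw [h0] at hFTC
  linarith [hFTC]


lemma phi_of_eq {G₁ G₂ : X → ℝ} (h : G₁ = G₂) (hp : PhiId ν v b G₁) : PhiId ν v b G₂ := h ▸ hp

lemma phi_add (hb : Integrable b ν) {G₁ G₂ : X → ℝ} (h1 : Measurable G₁) {M₁ : ℝ}
    (hM1 : ∀ x, |G₁ x| ≤ M₁) (h2 : Measurable G₂) {M₂ : ℝ} (hM2 : ∀ x, |G₂ x| ≤ M₂)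
    (hp1 : PhiId ν v b G₁) (hp2 : PhiId ν v b G₂) :
    PhiId ν v b (fun x => G₁ x + G₂ x) := by
  intro s
  have e1 : ∀ u : ℝ, ∫ y, (G₁ (u • v + y) + G₂ (u • v + y)) ∂ν
      = ∫ y, G₁ (u • v + y) ∂ν + ∫ y, G₂ (u • v + y) ∂ν := fun u =>
    integral_add (int_shift h1 hM1 u) (int_shift h2 hM2 u)
  have e2 : ∀ u : ℝ, ∫ y, (G₁ (u • v + y) + G₂ (u • v + y)) * b y ∂ν
      = (∫ y, G₁ (u • v + y) * b y ∂ν) + ∫ y, G₂ (u • v + y) * b y ∂ν := by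
    intro u
    rw [← integral_add (int_shift_mul hb h1 hM1 u) (int_shift_mul hb h2 hM2 u)]
    congr 1; funext y; ring
  have e3 : ∫ u in (0:ℝ)..s, ∫ y, (G₁ (u • v + y) + G₂ (u • v + y)) * b y ∂ν
      = (∫ u in (0:ℝ)..s, ∫ y, G₁ (u • v + y) * b y ∂ν)
        + ∫ u in (0:ℝ)..s, ∫ y, G₂ (u • v + y) * b y ∂ν := by
    rw [← intervalIntegral.integral_add (psi_intervalIntegrable hb h1 hM1 0 s)
      (psi_intervalIntegrable hb h2 hM2 0 s)]
    exact intervalIntegral.integral_congr fun u _ => e2 u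
  have e0 : ∫ y, (G₁ y + G₂ y) ∂ν = ∫ y, G₁ y ∂ν + ∫ y, G₂ y ∂ν := by
    simpa using e1 0
  calc ∫ y, (G₁ (s • v + y) + G₂ (s • v + y)) ∂ν
      = ∫ y, G₁ (s • v + y) ∂ν + ∫ y, G₂ (s • v + y) ∂ν := e1 s
    _ = (∫ y, G₁ y ∂ν - ∫ u in (0:ℝ)..s, ∫ y, G₁ (u • v + y) * b y ∂ν)
        + (∫ y, G₂ y ∂ν - ∫ u in (0:ℝ)..s, ∫ y, G₂ (u • v + y) * b y ∂ν) := by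
        rw [hp1 s, hp2 s]
    _ = ∫ y, (G₁ y + G₂ y) ∂ν
        - ∫ u in (0:ℝ)..s, ∫ y, (G₁ (u • v + y) + G₂ (u • v + y)) * b y ∂ν := by
        rw [e0, e3]; ring

lemma phi_smul (c : ℝ) {G : X → ℝ} (hp : PhiId ν v b G) :
    PhiId ν v b (fun x => c * G x) := by
  intro s
  have e2 : ∀ u : ℝ, ∫ y, (c * G (u • v + y)) * b y ∂ν
      = c * ∫ y, G (u • v + y) * b y ∂ν := by
    intro u
    rw [← integral_const_mul]
    congr 1; funext y; ring
  rw [integral_const_mul, integral_const_mul, hp s]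
  rw [intervalIntegral.integral_congr (g := fun u => c * ∫ y, G (u • v + y) * b y ∂ν)
    fun u _ => e2 u]
  rw [intervalIntegral.integral_const_mul]
  ring

lemma phi_lim (hb : Integrable b ν) {G : X → ℝ} {Gn : ℕ → X → ℝ} {M : ℝ}
    (hGn : ∀ n, Measurable (Gn n)) (hMn : ∀ n x, |Gn n x| ≤ M)
    (hG : Measurable G) (hlim : ∀ x, Tendsto (fun n => Gn n x) atTop (𝓝 (G x)))
    (hphi : ∀ n, PhiId ν v b (Gn n)) : PhiId ν v b G := by
  intro s
  have htend : ∀ w : ℝ, Tendsto (fun n => ∫ y, Gn n (w • v + y) ∂ν) atTop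
      (𝓝 (∫ y, G (w • v + y) ∂ν)) := by
    intro w
    refine tendsto_integral_filter_of_dominated_convergence (bound := fun _ => M)
      (Filter.Eventually.of_forall fun n => (meas_shift (hGn n) w).aestronglyMeasurable)
      (Filter.Eventually.of_forall fun n => Filter.Eventually.of_forall fun y => by
        simpa [Real.norm_eq_abs] using hMn n (w • v + y))
      (integrable_const M)
      (Filter.Eventually.of_forall fun y => hlim (w • v + y))
  have h1 := htend s
  have h2 : Tendsto (fun n => ∫ y, Gn n y ∂ν) atTop (𝓝 (∫ y, G y ∂ν)) := by
    have := htend 0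
    simpa using this
  have h3 : Tendsto (fun n => ∫ u in (0:ℝ)..s, ∫ y, Gn n (u • v + y) * b y ∂ν) atTop
      (𝓝 (∫ u in (0:ℝ)..s, ∫ y, G (u • v + y) * b y ∂ν)) := by
    refine intervalIntegral.tendsto_integral_filter_of_dominated_convergence
      (bound := fun _ => M * ∫ y, |b y| ∂ν)
      (Filter.Eventually.of_forall fun n => (psi_aesm hb (hGn n)).restrict)
      (Filter.Eventually.of_forall fun n => Filter.Eventually.of_forall fun u _ => by
        simpa [Real.norm_eq_abs] using psi_bound hb (hGn n) (hMn n) u)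
      intervalIntegrable_const
      (Filter.Eventually.of_forall fun u _ => ?_)
    refine tendsto_integral_filter_of_dominated_convergence (bound := fun y => M * |b y|)
      (Filter.Eventually.of_forall fun n =>
        ((meas_shift (hGn n) u).aestronglyMeasurable.mul hb.1))
      (Filter.Eventually.of_forall fun n => Filter.Eventually.of_forall fun y => by
        rw [Real.norm_eq_abs, abs_mul]
        exact mul_le_mul_of_nonneg_right (hMn n _) (abs_nonneg _))
      (hb.abs.const_mul M)
      (Filter.Eventually.of_forall fun y => (hlim (u • v + y)).mul tendsto_const_nhds)
  have h4 : (fun n => ∫ y, Gn n (s • v + y) ∂ν)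
      = fun n => ∫ y, Gn n y ∂ν - ∫ u in (0:ℝ)..s, ∫ y, Gn n (u • v + y) * b y ∂ν :=
    funext fun n => hphi n s
  rw [h4] at h1
  exact tendsto_nhds_unique h1 (h2.sub h3)

lemma niceFun_cylProd (L : ℕ → X →L[ℝ] ℝ) (n : ℕ) (l : List (ℕ × ℝ)) :
    NiceFun (fun x : X =>
      (l.map fun p => Real.smoothTransition ((n:ℝ) * (p.2 - L p.1 x) + 1)).prod) := by
  induction l with
  | nil => simpa using niceFun_const (X := X) 1
  | cons p l ih =>
    have : (fun x : X =>
        ((p :: l).map fun p => Real.smoothTransition ((n:ℝ) * (p.2 - L p.1 x) + 1)).prod)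
        = fun x => Real.smoothTransition ((n:ℝ) * (p.2 - L p.1 x) + 1) *
          (l.map fun p => Real.smoothTransition ((n:ℝ) * (p.2 - L p.1 x) + 1)).prod := by
      funext x; simp
    rw [this]
    exact (niceFun_factor (L p.1) n p.2).mul ih

lemma phi_halfspace (hb : Integrable b ν)
    (hIBP : ∀ f : X → ℝ, NiceFun f → ∫ x, fderiv ℝ f x v ∂ν = - ∫ x, b x * f x ∂ν)
    (L : ℕ → X →L[ℝ] ℝ) {A : Set X} (hA : A ∈ halfSpaceSystem L) :
    PhiId ν v b (A.indicator fun _ => (1:ℝ)) := by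
  obtain ⟨l, rfl⟩ := hA
  set Fn : ℕ → X → ℝ := fun n x =>
    (l.map fun p => Real.smoothTransition ((n:ℝ) * (p.2 - L p.1 x) + 1)).prod with hFn
  have hnice : ∀ n, NiceFun (Fn n) := fun n => niceFun_cylProd L n l
  have hIcc : ∀ (l' : List ℝ), (∀ a ∈ l', a ∈ Icc (0:ℝ) 1) → l'.prod ∈ Icc (0:ℝ) 1 := by
    intro l' h
    induction l' with
    | nil => simp
    | cons a l' ih =>
      rw [List.prod_cons]
      have ha := h a List.mem_cons_self
      have hl := ih fun z hz => h z (List.mem_cons_of_mem a hz)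
      exact ⟨mul_nonneg ha.1 hl.1, mul_le_one₀ ha.2 hl.1 hl.2⟩
  have hFb : ∀ n x, |Fn n x| ≤ 1 := by
    intro n x
    have := hIcc (l.map fun p => Real.smoothTransition ((n:ℝ) * (p.2 - L p.1 x) + 1)) ?_
    · rw [abs_le]; exact ⟨by linarith [this.1], this.2⟩
    · intro a ha
      obtain ⟨p, hp, rfl⟩ := List.mem_map.1 ha
      exact ⟨Real.smoothTransition.nonneg _, Real.smoothTransition.le_one _⟩
  have hlim : ∀ x, Tendsto (fun n => Fn n x) atTop
      (𝓝 (Set.indicator {x : X | ∀ p ∈ l, L p.1 x ≤ p.2} (fun _ => (1:ℝ)) x)) := by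
    intro x
    by_cases hx : ∀ p ∈ l, L p.1 x ≤ p.2
    · have hind : Set.indicator {x : X | ∀ p ∈ l, L p.1 x ≤ p.2} (fun _ => (1:ℝ)) x = 1 :=
        Set.indicator_of_mem (show x ∈ {x : X | ∀ p ∈ l, L p.1 x ≤ p.2} from hx) _
      rw [hind]
      have hFn1 : ∀ n, Fn n x = 1 := by
        intro n
        refine List.prod_eq_one fun z hz => ?_
        obtain ⟨p, hp, rfl⟩ := List.mem_map.1 hz
        refine Real.smoothTransition.one_of_one_le ?_
        have h1 : (0:ℝ) ≤ (n:ℝ) * (p.2 - L p.1 x) :=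
          mul_nonneg (Nat.cast_nonneg n) (by linarith [hx p hp])
        linarith
      simp only [hFn1]
      exact tendsto_const_nhds
    · have hind : Set.indicator {x : X | ∀ p ∈ l, L p.1 x ≤ p.2} (fun _ => (1:ℝ)) x = 0 :=
        Set.indicator_of_notMem (show x ∉ {x : X | ∀ p ∈ l, L p.1 x ≤ p.2} from hx) _
      rw [hind]
      push_neg at hx
      obtain ⟨p, hp, hpx⟩ := hx
      have hrc : (0:ℝ) < L p.1 x - p.2 := by linarith
      refine Tendsto.congr' ?_ (tendsto_const_nhds (x := (0:ℝ)))
      filter_upwards [eventually_ge_atTop ⌈(L p.1 x - p.2)⁻¹⌉₊] with n hn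
      refine (List.prod_eq_zero (List.mem_map.2 ⟨p, hp, ?_⟩)).symm
      refine Real.smoothTransition.zero_of_nonpos ?_
      have h1 : (L p.1 x - p.2)⁻¹ ≤ (n:ℝ) :=
        le_trans (Nat.le_ceil _) (by exact_mod_cast hn)
      have h2 : (1:ℝ) ≤ (n:ℝ) * (L p.1 x - p.2) := by
        calc (1:ℝ) = (L p.1 x - p.2)⁻¹ * (L p.1 x - p.2) := by
              rw [inv_mul_cancel₀ (ne_of_gt hrc)]
          _ ≤ (n:ℝ) * (L p.1 x - p.2) := mul_le_mul_of_nonneg_right h1 hrc.le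
      nlinarith
  refine phi_lim hb (fun n => ((hnice n).1.continuous).measurable) hFb ?_ hlim
    (fun n => phi_nice hb hIBP (hnice n))
  exact (measurable_const.indicator
    (halfSpaceSystem_isClosed L ⟨l, rfl⟩).measurableSet)

lemma phi_measSet (hb : Integrable b ν)
    (hIBP : ∀ f : X → ℝ, NiceFun f → ∫ x, fderiv ℝ f x v ∂ν = - ∫ x, b x * f x ∂ν)
    {L : ℕ → X →L[ℝ] ℝ}
    (hgen : ‹MeasurableSpace X› = MeasurableSpace.generateFrom (halfSpaceSystem L))
    (hpi : IsPiSystem (halfSpaceSystem L))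
    {A : Set X} (hA : MeasurableSet A) :
    PhiId ν v b (A.indicator fun _ => (1:ℝ)) := by
  refine MeasurableSpace.induction_on_inter
    (C := fun A _ => PhiId ν v b (A.indicator fun _ => (1:ℝ))) hgen hpi
    ?_ ?_ ?_ ?_ A hA
  · simpa using phi_nice hb hIBP (niceFun_const 0)
  · exact fun A hA => phi_halfspace hb hIBP L hA
  · intro A hAm hA
    have h1 : PhiId ν v b (fun x => (1:ℝ) + (-1) * (A.indicator (fun _ => (1:ℝ)) x)) :=
      phi_add hb measurable_const (M₁ := 1) (fun x => by norm_num)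
        ((measurable_const.indicator hAm).const_mul _) (M₂ := 1)
        (fun x => by
          rcases Set.indicator_eq_zero_or_self A (fun _ => (1:ℝ)) x with h | h <;>
            simp [h, abs_le] <;> norm_num)
        (phi_nice hb hIBP (niceFun_const 1)) (phi_smul (-1) hA)
    refine phi_of_eq ?_ h1
    funext x
    by_cases hx : x ∈ A <;> simp [hx]
  · intro f hdisj hfm hf
    set Gn : ℕ → X → ℝ := fun n => (⋃ i ∈ Finset.range n, f i).indicator fun _ => (1:ℝ)
      with hGn
    have hGnm : ∀ n, Measurable (Gn n) := fun n =>
      measurable_const.indicator (MeasurableSet.biUnion (Finset.range n).countable_toSet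
        fun i _ => hfm i)
    have hGnb : ∀ n x, |Gn n x| ≤ 1 := by
      intro n x
      have : Gn n x = 0 ∨ Gn n x = 1 := by
        by_cases hx : x ∈ ⋃ i ∈ Finset.range n, f i
        · exact Or.inr (Set.indicator_of_mem hx _)
        · exact Or.inl (Set.indicator_of_notMem hx _)
      rcases this with h | h <;> rw [h] <;> norm_num
    have hGnphi : ∀ n, PhiId ν v b (Gn n) := by
      intro n
      induction n with
      | zero => simpa [Gn] using phi_nice hb hIBP (niceFun_const 0)
      | succ n ih =>
        have hsplit : Gn (n+1) = fun x => Gn n x + (f n).indicator (fun _ => (1:ℝ)) x := by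
          funext x
          show Gn (n+1) x = Gn n x + (f n).indicator (fun _ => (1:ℝ)) x
          by_cases hx : x ∈ f n
          · have hxn : x ∉ ⋃ i ∈ Finset.range n, f i := by
              simp only [Set.mem_iUnion, not_exists]
              intro i hi hxi
              exact absurd (Set.disjoint_left.1 (hdisj (Finset.mem_range.1 hi).ne) hxi) (by simp [hx])
            have hxmem : x ∈ ⋃ i ∈ Finset.range (n+1), f i := by
              simp only [Set.mem_iUnion]
              exact ⟨n, Finset.mem_range.2 (Nat.lt_succ_self n), hx⟩
            rw [show Gn (n+1) x = 1 from Set.indicator_of_mem hxmem _,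
              show Gn n x = 0 from Set.indicator_of_notMem hxn _,
              Set.indicator_of_mem hx]
            norm_num
          · by_cases hxu : x ∈ ⋃ i ∈ Finset.range n, f i
            · have hxmem : x ∈ ⋃ i ∈ Finset.range (n+1), f i := by
                simp only [Set.mem_iUnion] at hxu ⊢
                obtain ⟨i, hi, hxi⟩ := hxu
                exact ⟨i, Finset.mem_range.2 (Nat.lt_succ_of_lt (Finset.mem_range.1 hi)), hxi⟩
              rw [show Gn (n+1) x = 1 from Set.indicator_of_mem hxmem _,
                show Gn n x = 1 from Set.indicator_of_mem hxu _,
                Set.indicator_of_notMem hx]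
              norm_num
            · have hxmem : x ∉ ⋃ i ∈ Finset.range (n+1), f i := by
                simp only [Set.mem_iUnion, not_exists] at hxu ⊢
                intro i hi hxi
                rcases Nat.lt_succ_iff_lt_or_eq.1 (Finset.mem_range.1 hi) with h | rfl
                · exact hxu i (Finset.mem_range.2 h) hxi
                · exact hx hxi
              rw [show Gn (n+1) x = 0 from Set.indicator_of_notMem hxmem _,
                show Gn n x = 0 from Set.indicator_of_notMem hxu _,
                Set.indicator_of_notMem hx]
              norm_num
        rw [hsplit]
        exact phi_add hb (hGnm n) (hGnb n)
          (measurable_const.indicator (hfm n))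
          (M₂ := 1) (fun x => by
            rcases Set.indicator_eq_zero_or_self (f n) (fun _ => (1:ℝ)) x with h | h <;>
              simp [h] <;> norm_num)
          ih (hf n)
    have hGm : Measurable ((⋃ i, f i).indicator fun _ : X => (1:ℝ)) :=
      measurable_const.indicator (MeasurableSet.iUnion hfm)
    refine phi_lim hb hGnm hGnb hGm ?_ hGnphi
    intro x
    by_cases hx : x ∈ ⋃ i, f i
    · obtain ⟨i, hi⟩ := Set.mem_iUnion.1 hx
      rw [Set.indicator_of_mem hx]
      refine Tendsto.congr' ?_ (tendsto_const_nhds (x := (1:ℝ)))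
      filter_upwards [eventually_ge_atTop (i+1)] with n hn
      have : x ∈ ⋃ j ∈ Finset.range n, f j := by
        simp only [Set.mem_iUnion]
        exact ⟨i, Finset.mem_range.2 (Nat.lt_of_succ_le hn), hi⟩
      exact (Set.indicator_of_mem this (fun _ => (1:ℝ))).symm
    · rw [Set.indicator_of_notMem hx]
      have : ∀ n, Gn n x = 0 := by
        intro n
        refine Set.indicator_of_notMem ?_ _
        intro hmem
        simp only [Set.mem_iUnion] at hmem
        obtain ⟨i, _, hxi⟩ := hmem
        exact hx (Set.mem_iUnion.2 ⟨i, hxi⟩)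
      simp only [this]
      exact tendsto_const_nhds


lemma phi_simple (hb : Integrable b ν)
    (hIBP : ∀ f : X → ℝ, NiceFun f → ∫ x, fderiv ℝ f x v ∂ν = - ∫ x, b x * f x ∂ν)
    {L : ℕ → X →L[ℝ] ℝ}
    (hgen : ‹MeasurableSpace X› = MeasurableSpace.generateFrom (halfSpaceSystem L))
    (hpi : IsPiSystem (halfSpaceSystem L))
    (f : SimpleFunc X ℝ) : PhiId ν v b f := by
  induction f using MeasureTheory.SimpleFunc.induction with
  | const c hs =>
    rename_i s
    refine phi_of_eq ?_ (phi_smul c (phi_measSet hb hIBP hgen hpi hs))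
    funext x
    by_cases hx : x ∈ s
    · simp [SimpleFunc.piecewise_apply, hx]
    · simp [SimpleFunc.piecewise_apply, hx]
  | @add f g hdisj hf hg =>
    obtain ⟨Cf, hCf⟩ := f.exists_forall_norm_le
    obtain ⟨Cg, hCg⟩ := g.exists_forall_norm_le
    refine phi_of_eq ?_ (phi_add hb f.measurable (M₁ := Cf)
      (fun x => by simpa [Real.norm_eq_abs] using hCf x)
      g.measurable (M₂ := Cg) (fun x => by simpa [Real.norm_eq_abs] using hCg x) hf hg)
    funext x
    simp

lemma phi_bounded (hb : Integrable b ν)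
    (hIBP : ∀ f : X → ℝ, NiceFun f → ∫ x, fderiv ℝ f x v ∂ν = - ∫ x, b x * f x ∂ν)
    {L : ℕ → X →L[ℝ] ℝ}
    (hgen : ‹MeasurableSpace X› = MeasurableSpace.generateFrom (halfSpaceSystem L))
    (hpi : IsPiSystem (halfSpaceSystem L))
    {G : X → ℝ} (hG : Measurable G) {M : ℝ} (hM : ∀ x, |G x| ≤ M) : PhiId ν v b G := by
  have hM0 : 0 ≤ M := le_trans (abs_nonneg _) (hM 0)
  have h0s : (0:ℝ) ∈ Icc (-M) M := ⟨by linarith, hM0⟩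
  set Gn : ℕ → SimpleFunc X ℝ := fun n => SimpleFunc.approxOn G hG (Icc (-M) M) 0 h0s n
    with hGndef
  have hmem : ∀ n x, Gn n x ∈ Icc (-M) M := fun n x =>
    SimpleFunc.approxOn_mem hG h0s n x
  refine phi_lim hb (fun n => (Gn n).measurable) (M := M)
    (fun n x => abs_le.2 ⟨(hmem n x).1, (hmem n x).2⟩) hG ?_
    (fun n => phi_simple hb hIBP hgen hpi (Gn n))
  intro x
  refine SimpleFunc.tendsto_approxOn hG h0s ?_
  rw [isClosed_Icc.closure_eq]
  exact ⟨(abs_le.1 (hM x)).1, (abs_le.1 (hM x)).2⟩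

lemma phi_lip (hb : Integrable b ν) {G : X → ℝ} (hG : Measurable G) {M : ℝ}
    (hM : ∀ x, |G x| ≤ M) (hphi : PhiId ν v b G) (u : ℝ) :
    |(∫ y, G (u • v + y) ∂ν) - ∫ y, G y ∂ν| ≤ (M * ∫ y, |b y| ∂ν) * |u| := by
  rw [hphi u]
  have h1 : ‖∫ r in (0:ℝ)..u, ∫ y, G (r • v + y) * b y ∂ν‖
      ≤ (M * ∫ y, |b y| ∂ν) * |u - 0| :=
    intervalIntegral.norm_integral_le_of_norm_le_const fun r _ => by
      simpa [Real.norm_eq_abs] using psi_bound hb hG hM r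
  rw [Real.norm_eq_abs, sub_zero] at h1
  calc |(∫ y, G y ∂ν) - (∫ r in (0:ℝ)..u, ∫ y, G (r • v + y) * b y ∂ν) - ∫ y, G y ∂ν|
      = |∫ r in (0:ℝ)..u, ∫ y, G (r • v + y) * b y ∂ν| := by
        rw [abs_sub_comm]; congr 1; ring
    _ ≤ (M * ∫ y, |b y| ∂ν) * |u| := h1

lemma psi_continuousAt (hb : Integrable b ν)
    (hIBP : ∀ f : X → ℝ, NiceFun f → ∫ x, fderiv ℝ f x v ∂ν = - ∫ x, b x * f x ∂ν)
    {L : ℕ → X →L[ℝ] ℝ}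
    (hgen : ‹MeasurableSpace X› = MeasurableSpace.generateFrom (halfSpaceSystem L))
    (hpi : IsPiSystem (halfSpaceSystem L))
    {G : X → ℝ} (hG : Measurable G) {M : ℝ} (hM : ∀ x, |G x| ≤ M) :
    ContinuousAt (fun u : ℝ => ∫ y, G (u • v + y) * b y ∂ν) 0 := by
  have hM0 : 0 ≤ M := le_trans (abs_nonneg _) (hM 0)
  have hbabs : (0:ℝ) ≤ ∫ y, |b y| ∂ν := integral_nonneg fun y => abs_nonneg _
  rw [ContinuousAt, Metric.tendsto_nhds]
  intro ε hε
  obtain ⟨φ, hφ1, hφint⟩ := hb.exists_boundedContinuous_integral_sub_le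
    (ε := ε / (8 * (M + 1))) (by positivity)
  have hφb : ∀ x : X, |φ x| ≤ ‖φ‖ := fun x => by
    simpa [Real.norm_eq_abs] using φ.norm_coe_le_norm x
  have hφm : Measurable (φ : X → ℝ) := φ.continuous.measurable
  set K : ℝ := (M * ‖φ‖) * ∫ y, |b y| ∂ν with hK
  have hK0 : 0 ≤ K := by positivity
  -- the Gφ product identity
  have hGφ : PhiId ν v b (fun z => G z * φ z) :=
    phi_bounded hb hIBP hgen hpi (hG.mul hφm)
      (M := M * ‖φ‖) (fun z => by
        rw [abs_mul]
        exact mul_le_mul (hM z) (hφb z) (abs_nonneg _) hM0)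
  have hGφm : Measurable fun z : X => G z * φ z := hG.mul hφm
  have hGφb : ∀ z, |G z * φ z| ≤ M * ‖φ‖ := fun z => by
    rw [abs_mul]; exact mul_le_mul (hM z) (hφb z) (abs_nonneg _) hM0
  -- main pointwise estimate
  have key : ∀ u : ℝ, |(∫ y, G (u • v + y) * b y ∂ν) - ∫ y, G y * b y ∂ν|
      ≤ 2 * (M * (ε / (8 * (M + 1)))) + M * (∫ y, |φ (u • v + y) - φ y| ∂ν) + K * |u| := by
    intro u
    have int_Gu_b := int_shift_mul (v := v) hb hG hM u
    have int_Gu_φ : Integrable (fun y => G (u • v + y) * φ y) ν :=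
      (φ.integrable ν).bdd_mul (c := M) (meas_shift hG u).aestronglyMeasurable
        (Filter.Eventually.of_forall fun y => by
          simpa [Real.norm_eq_abs] using hM (u • v + y))
    have int_Gφu : Integrable (fun y => G (u • v + y) * φ (u • v + y)) ν :=
      int_shift hGφm hGφb u
    have int_G_b : Integrable (fun y => G y * b y) ν := by
      simpa using int_shift_mul (v := v) hb hG hM 0
    have int_G_φ : Integrable (fun y => G y * φ y) ν := by
      simpa using int_shift (v := v) hGφm hGφb 0
    have e1 : |(∫ y, G (u • v + y) * b y ∂ν) - ∫ y, G (u • v + y) * φ y ∂ν|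
        ≤ M * (ε / (8 * (M + 1))) := by
      rw [← integral_sub int_Gu_b int_Gu_φ]
      calc |∫ y, (G (u • v + y) * b y - G (u • v + y) * φ y) ∂ν|
          ≤ ∫ y, |G (u • v + y) * b y - G (u • v + y) * φ y| ∂ν := by
            simpa [Real.norm_eq_abs] using norm_integral_le_integral_norm
              (fun y : X => G (u • v + y) * b y - G (u • v + y) * φ y) (μ := ν)
        _ ≤ ∫ y, M * ‖b y - φ y‖ ∂ν := by
            refine integral_mono ((int_Gu_b.sub int_Gu_φ).abs)
              ((hb.sub (φ.integrable ν)).norm.const_mul M) fun y => ?_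
            have : G (u • v + y) * b y - G (u • v + y) * φ y
                = G (u • v + y) * (b y - φ y) := by ring
            rw [this, abs_mul, Real.norm_eq_abs]
            exact mul_le_mul_of_nonneg_right (hM _) (abs_nonneg _)
        _ = M * ∫ y, ‖b y - φ y‖ ∂ν := integral_const_mul _ _
        _ ≤ M * (ε / (8 * (M + 1))) := mul_le_mul_of_nonneg_left hφ1 hM0
    have e2 : |(∫ y, G (u • v + y) * φ y ∂ν) - ∫ y, G (u • v + y) * φ (u • v + y) ∂ν|
        ≤ M * (∫ y, |φ (u • v + y) - φ y| ∂ν) := by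
      rw [← integral_sub int_Gu_φ int_Gφu]
      calc |∫ y, (G (u • v + y) * φ y - G (u • v + y) * φ (u • v + y)) ∂ν|
          ≤ ∫ y, |G (u • v + y) * φ y - G (u • v + y) * φ (u • v + y)| ∂ν := by
            simpa [Real.norm_eq_abs] using norm_integral_le_integral_norm
              (fun y : X => G (u • v + y) * φ y - G (u • v + y) * φ (u • v + y)) (μ := ν)
        _ ≤ ∫ y, M * |φ (u • v + y) - φ y| ∂ν := by
            refine integral_mono ((int_Gu_φ.sub int_Gφu).abs) ?_ fun y => ?_
            · refine (Integrable.const_mul ?_ M)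
              have : Integrable (fun y => φ (u • v + y)) ν :=
                int_shift hφm (fun x => hφb x) u
              exact (this.sub (φ.integrable ν)).abs
            · have : G (u • v + y) * φ y - G (u • v + y) * φ (u • v + y)
                  = G (u • v + y) * (φ y - φ (u • v + y)) := by ring
              rw [this, abs_mul, abs_sub_comm]
              exact mul_le_mul_of_nonneg_right (hM _) (abs_nonneg _)
        _ = M * ∫ y, |φ (u • v + y) - φ y| ∂ν := integral_const_mul _ _
    have e3 : |(∫ y, G (u • v + y) * φ (u • v + y) ∂ν) - ∫ y, G y * φ y ∂ν|
        ≤ K * |u| := by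
      have := phi_lip hb hGφm hGφb hGφ u
      simpa [hK] using this
    have e4 : |(∫ y, G y * φ y ∂ν) - ∫ y, G y * b y ∂ν|
        ≤ M * (ε / (8 * (M + 1))) := by
      rw [← integral_sub int_G_φ int_G_b]
      calc |∫ y, (G y * φ y - G y * b y) ∂ν|
          ≤ ∫ y, |G y * φ y - G y * b y| ∂ν := by
            simpa [Real.norm_eq_abs] using norm_integral_le_integral_norm
              (fun y : X => G y * φ y - G y * b y) (μ := ν)
        _ ≤ ∫ y, M * ‖b y - φ y‖ ∂ν := by
            refine integral_mono ((int_G_φ.sub int_G_b).abs)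
              ((hb.sub (φ.integrable ν)).norm.const_mul M) fun y => ?_
            have : G y * φ y - G y * b y = G y * (φ y - b y) := by ring
            rw [this, abs_mul, Real.norm_eq_abs, abs_sub_comm]
            exact mul_le_mul_of_nonneg_right (hM _) (abs_nonneg _)
        _ = M * ∫ y, ‖b y - φ y‖ ∂ν := integral_const_mul _ _
        _ ≤ M * (ε / (8 * (M + 1))) := mul_le_mul_of_nonneg_left hφ1 hM0
    calc |(∫ y, G (u • v + y) * b y ∂ν) - ∫ y, G y * b y ∂ν|
        = |((∫ y, G (u • v + y) * b y ∂ν) - ∫ y, G (u • v + y) * φ y ∂ν)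
          + ((∫ y, G (u • v + y) * φ y ∂ν) - ∫ y, G (u • v + y) * φ (u • v + y) ∂ν)
          + ((∫ y, G (u • v + y) * φ (u • v + y) ∂ν) - ∫ y, G y * φ y ∂ν)
          + ((∫ y, G y * φ y ∂ν) - ∫ y, G y * b y ∂ν)| := by congr 1; ring
      _ ≤ |(∫ y, G (u • v + y) * b y ∂ν) - ∫ y, G (u • v + y) * φ y ∂ν|
          + |(∫ y, G (u • v + y) * φ y ∂ν) - ∫ y, G (u • v + y) * φ (u • v + y) ∂ν|
          + |(∫ y, G (u • v + y) * φ (u • v + y) ∂ν) - ∫ y, G y * φ y ∂ν|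
          + |(∫ y, G y * φ y ∂ν) - ∫ y, G y * b y ∂ν| := by
            set a1 := (∫ y, G (u • v + y) * b y ∂ν) - ∫ y, G (u • v + y) * φ y ∂ν
            set a2 := (∫ y, G (u • v + y) * φ y ∂ν) - ∫ y, G (u • v + y) * φ (u • v + y) ∂ν
            set a3 := (∫ y, G (u • v + y) * φ (u • v + y) ∂ν) - ∫ y, G y * φ y ∂ν
            set a4 := (∫ y, G y * φ y ∂ν) - ∫ y, G y * b y ∂ν
            linarith [abs_add_le (a1 + a2 + a3) a4, abs_add_le (a1 + a2) a3, abs_add_le a1 a2]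
      _ ≤ 2 * (M * (ε / (8 * (M + 1)))) + M * (∫ y, |φ (u • v + y) - φ y| ∂ν) + K * |u| := by
            linarith [e1, e2, e3, e4]
  -- the translation-continuity of φ in L¹
  have htendφ : Tendsto (fun u : ℝ => ∫ y, |φ (u • v + y) - φ y| ∂ν) (𝓝 0) (𝓝 0) := by
    have h1 : Tendsto (fun u : ℝ => ∫ y, |φ (u • v + y) - φ y| ∂ν) (𝓝 0)
        (𝓝 (∫ y, |φ ((0:ℝ) • v + y) - φ y| ∂ν)) := by
      refine tendsto_integral_filter_of_dominated_convergence (bound := fun _ => 2 * ‖φ‖)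
        (Filter.Eventually.of_forall fun u =>
          (((φ.continuous.comp (continuous_const.add continuous_id)).sub
            φ.continuous).abs).aestronglyMeasurable)
        (Filter.Eventually.of_forall fun u => Filter.Eventually.of_forall fun y => by
          rw [Real.norm_eq_abs, abs_abs]
          calc |φ (u • v + y) - φ y| ≤ |φ (u • v + y)| + |φ y| := abs_sub _ _
            _ ≤ ‖φ‖ + ‖φ‖ := add_le_add (hφb _) (hφb _)
            _ = 2 * ‖φ‖ := by ring)
        (integrable_const _)
        (Filter.Eventually.of_forall fun y => ?_)
      have : Continuous fun u : ℝ => |φ (u • v + y) - φ y| :=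
        ((φ.continuous.comp ((continuous_id.smul continuous_const).add
          continuous_const)).sub continuous_const).abs
      exact this.tendsto 0
    simpa using h1
  -- conclude
  have hev1 : ∀ᶠ u : ℝ in 𝓝 0, M * (∫ y, |φ (u • v + y) - φ y| ∂ν) < ε / 4 + ε / 8 := by
    have : ∀ᶠ u : ℝ in 𝓝 0, (∫ y, |φ (u • v + y) - φ y| ∂ν) < ε / (4 * (M + 1)) :=
      htendφ (Iio_mem_nhds (by positivity))
    filter_upwards [this] with u hu
    have : M * (∫ y, |φ (u • v + y) - φ y| ∂ν) ≤ M * (ε / (4 * (M + 1))) := by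
      refine mul_le_mul_of_nonneg_left hu.le hM0
    have h2 : M * (ε / (4 * (M + 1))) ≤ ε / 4 := by
      have hM1 : (0:ℝ) < M + 1 := by linarith
      calc M * (ε / (4 * (M + 1))) ≤ (M + 1) * (ε / (4 * (M + 1))) := by
            refine mul_le_mul_of_nonneg_right (by linarith) (by positivity)
        _ = ε / 4 := by field_simp
    linarith
  have hev2 : ∀ᶠ u : ℝ in 𝓝 0, K * |u| < ε / 4 := by
    have hball := Metric.ball_mem_nhds (0:ℝ) (show 0 < ε / (4 * (K + 1)) by positivity)
    filter_upwards [hball] with u hu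
    rw [Metric.mem_ball, Real.dist_eq, sub_zero] at hu
    calc K * |u| ≤ (K + 1) * |u| := by
          refine mul_le_mul_of_nonneg_right (by linarith) (abs_nonneg _)
      _ < (K + 1) * (ε / (4 * (K + 1))) := by
          refine mul_lt_mul_of_pos_left hu (by linarith)
      _ = ε / 4 := by field_simp
  filter_upwards [hev1, hev2] with u hu1 hu2
  rw [Real.dist_eq]
  have h5 : 2 * (M * (ε / (8 * (M + 1)))) ≤ ε / 4 := by
    have hM1 : (0:ℝ) < M + 1 := by linarith
    have hle : M * (ε / (8 * (M + 1))) ≤ (M + 1) * (ε / (8 * (M + 1))) := by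
      refine mul_le_mul_of_nonneg_right (by linarith) (by positivity)
    have heq : (M + 1) * (ε / (8 * (M + 1))) = ε / 8 := by field_simp
    linarith
  have hzero : ∫ y, G ((0:ℝ) • v + y) * b y ∂ν = ∫ y, G y * b y ∂ν := by simp
  calc |(∫ y, G (u • v + y) * b y ∂ν) - ∫ y, G ((0:ℝ) • v + y) * b y ∂ν|
      = |(∫ y, G (u • v + y) * b y ∂ν) - ∫ y, G y * b y ∂ν| := by rw [hzero]
    _ ≤ 2 * (M * (ε / (8 * (M + 1)))) + M * (∫ y, |φ (u • v + y) - φ y| ∂ν) + K * |u| := key u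
    _ < ε / 4 + (ε / 4 + ε / 8) + ε / 4 := by linarith
    _ ≤ ε := by linarith


lemma main_hasDerivAt (hb : Integrable b ν)
    (hIBP : ∀ f : X → ℝ, NiceFun f → ∫ x, fderiv ℝ f x v ∂ν = - ∫ x, b x * f x ∂ν)
    {G : X → ℝ} (hG : Measurable G) {M : ℝ} (hM : ∀ x, |G x| ≤ M) :
    HasDerivAt (fun τ : ℝ => ∫ y, G (τ • v + y) ∂ν) (-∫ y, G y * b y ∂ν) 0 := by
  obtain ⟨L, hnorm⟩ := exists_norming_family (X := X)
  have hgen := generateFrom_halfSpaceSystem hnorm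
  have hpi := isPiSystem_halfSpaceSystem L
  have hphi : PhiId ν v b G := phi_bounded hb hIBP hgen hpi hG hM
  have hΨc : ContinuousAt (fun u : ℝ => ∫ y, G (u • v + y) * b y ∂ν) 0 :=
    psi_continuousAt hb hIBP hgen hpi hG hM
  have hint : HasDerivAt
      (fun τ : ℝ => ∫ u in (0:ℝ)..τ, ∫ y, G (u • v + y) * b y ∂ν)
      (∫ y, G ((0:ℝ) • v + y) * b y ∂ν) 0 :=
    intervalIntegral.integral_hasDerivAt_right (psi_intervalIntegrable hb hG hM 0 0)
      ⟨univ, univ_mem, ((psi_aesm hb hG).restrict)⟩ hΨc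
  have hder : HasDerivAt
      (fun τ : ℝ => (∫ y, G y ∂ν) - ∫ u in (0:ℝ)..τ, ∫ y, G (u • v + y) * b y ∂ν)
      (-∫ y, G y * b y ∂ν) 0 := by
    have h0 : ∫ y, G ((0:ℝ) • v + y) * b y ∂ν = ∫ y, G y * b y ∂ν := by simp
    have := (hasDerivAt_const (0:ℝ) (∫ y, G y ∂ν)).sub hint
    rw [h0] at this
    simpa [Pi.sub_def] using this
  have heq : (fun τ : ℝ => ∫ y, G (τ • v + y) ∂ν)
      = fun τ : ℝ => (∫ y, G y ∂ν) - ∫ u in (0:ℝ)..τ, ∫ y, G (u • v + y) * b y ∂ν :=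
    funext fun τ => hphi τ
  rw [heq]
  exact hder

end Fomin

open MeasureTheory

/-- Differentiability of `P_t g` along directions of `H` with the explicit
representation of the derivative, and the corresponding bound. -/
theorem statement6 {X H : Type*}
    [NormedAddCommGroup X] [NormedSpace ℝ X]
    [MeasurableSpace X] [BorelSpace X] [SecondCountableTopology X]
    [NormedAddCommGroup H] [NormedSpace ℝ H]
    (ι : H →L[ℝ] X)
    (T : ℝ → X →L[ℝ] X) (S : ℝ → H →L[ℝ] H)
    (hTS : ∀ (t : ℝ) (h : H), ι (S t h) = T t (ι h))   -- T_t(H) ⊂ H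
    (μ : ℝ → Measure X) (hprob : ∀ t : ℝ, IsProbabilityMeasure (μ t))
    (β : ℝ → H → X → ℝ) (C ω θ : ℝ) (hC : 0 < C) (hθ : 0 < θ)
    (hFomin : ∀ t : ℝ, 0 < t → ∀ h : H, IsFominDeriv (μ t) (T t (ι h)) (β t h))
    (hbound : ∀ t : ℝ, 0 < t → ∀ h : H,
      ∫ y, |β t h y| ∂(μ t) ≤ C * Real.exp (ω * t) / t ^ θ * ‖h‖)
    (g : X → ℝ) (hg : Measurable g) (Cg : ℝ) (hgb : ∀ x, |g x| ≤ Cg)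
    (t : ℝ) (ht : 0 < t) (x : X) (h : H) :
    HasDerivAt (fun τ : ℝ => ∫ y, g (T t (x + τ • ι h) + y) ∂(μ t))
      (-∫ y, g (T t x + y) * β t h y ∂(μ t)) 0 ∧
    |∫ y, g (T t x + y) * β t h y ∂(μ t)| ≤ C * Real.exp (ω * t) / t ^ θ * ‖h‖ * Cg := by
  haveI : IsProbabilityMeasure (μ t) := hprob t
  set ν : Measure X := μ t with hν
  set v : X := T t (ι h) with hv
  set b : X → ℝ := β t h with hb'
  obtain ⟨hbint, hIBP0⟩ := hFomin t ht h
  have hIBP : ∀ f : X → ℝ, NiceFun f → ∫ z, fderiv ℝ f z v ∂ν = - ∫ z, b z * f z ∂ν :=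
    fun f hf => hIBP0 f hf.1 hf.2.1 hf.2.2
  set G : X → ℝ := fun z => g (T t x + z) with hG'
  have hGm : Measurable G := hg.comp (measurable_id.const_add (T t x))
  have hGb : ∀ z, |G z| ≤ Cg := fun z => hgb _
  have hCg0 : 0 ≤ Cg := le_trans (abs_nonneg _) (hgb 0)
  constructor
  · have hmain := main_hasDerivAt (ν := ν) (v := v) (b := b) hbint hIBP hGm hGb
    have heq : (fun τ : ℝ => ∫ y, g (T t (x + τ • ι h) + y) ∂(μ t))
        = fun τ : ℝ => ∫ y, G (τ • v + y) ∂ν := by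
      funext τ
      congr 1
      funext y
      show g (T t (x + τ • ι h) + y) = g (T t x + (τ • v + y))
      rw [map_add, (T t).map_smul, add_assoc]
    rw [heq]
    exact hmain
  · have hintGb : Integrable (fun y => G y * b y) ν :=
      hbint.bdd_mul (c := Cg) hGm.aestronglyMeasurable
        (Filter.Eventually.of_forall fun y => by
          simpa [Real.norm_eq_abs] using hGb y)
    calc |∫ y, g (T t x + y) * β t h y ∂(μ t)|
        ≤ ∫ y, |G y| * |b y| ∂ν := by
          simpa [Real.norm_eq_abs] using
            norm_integral_le_integral_norm (fun y : X => G y * b y) (μ := ν)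
      _ ≤ ∫ y, Cg * |b y| ∂ν := by
          refine integral_mono ?_ (hbint.abs.const_mul Cg) fun y => ?_
          · simpa [abs_mul] using hintGb.abs
          · exact mul_le_mul_of_nonneg_right (hGb y) (abs_nonneg _)
      _ = Cg * ∫ y, |b y| ∂ν := integral_const_mul _ _
      _ ≤ Cg * (C * Real.exp (ω * t) / t ^ θ * ‖h‖) :=
          mul_le_mul_of_nonneg_left (hbound t ht h) hCg0
      _ = C * Real.exp (ω * t) / t ^ θ * ‖h‖ * Cg := by ring
end

section
/- Let P_t be a generalized Mehler semigroup with ‖P_t f‖_∞ ≤ ‖f‖_∞, and suppose D²_H P_t exists for t > 0 with sup_x ‖D²_H P_t f(x)‖_{L²(H)} ≤ K₂ e^{ωt} t^{-2θ} ‖f‖_∞ for all f ∈ C_b(X), where θ = 1 (so 1/θ = 1), ω ∈ ℝ and λ > max{ω, 0}. Then the resolvent u(x) = ∫₀^∞ e^{-λt} P_t f(x) dt satisfies |u(x+2h) − 2u(x+h) + u(x)| ≤ (4 + K₂) ‖h‖_H ‖f‖_∞ for all x ∈ X and h ∈ H; i.e. u belongs to the Zygmund space Z¹_H(X) with seminorm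 at most (4+K₂)‖f‖_∞. -/
open MeasureTheory Set

/-- Zygmund regularity of the resolvent in the critical case `θ = 1`:
if `‖D²_H P_t f‖ ≤ K₂ e^{ωt} t^{-2} ‖f‖_∞`, then `u = ∫₀^∞ e^{-λt} P_t f dt` satisfies
`|u(x+2h) - 2u(x+h) + u(x)| ≤ (4 + K₂) ‖h‖_H ‖f‖_∞`. -/
theorem statement18 {X H : Type*}
    [NormedAddCommGroup X] [NormedSpace ℝ X]
    [NormedAddCommGroup H] [NormedSpace ℝ H]
    (ι : H →L[ℝ] X)
    (P : ℝ → (X → ℝ) → X → ℝ)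
    (f : X → ℝ) (hf : Continuous f) (Cf : ℝ) (hCf : 0 ≤ Cf) (hfb : ∀ x, |f x| ≤ Cf)
    (hcontr : ∀ t : ℝ, 0 < t → ∀ x, |P t f x| ≤ Cf)
    (D1 : ℝ → X → H →L[ℝ] ℝ) (D2 : ℝ → X → H →L[ℝ] H →L[ℝ] ℝ)
    (hd1 : ∀ t : ℝ, 0 < t → ∀ (x : X) (h : H),
      HasDerivAt (fun τ : ℝ => P t f (x + τ • ι h)) (D1 t x h) 0)
    (hd2 : ∀ t : ℝ, 0 < t → ∀ (x : X) (h k : H),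
      HasDerivAt (fun τ : ℝ => D1 t (x + τ • ι h) k) (D2 t x h k) 0)
    (K₂ ω l : ℝ) (hK : 0 ≤ K₂) (hl : max ω 0 < l)
    (hbound : ∀ t : ℝ, 0 < t → ∀ x : X, ‖D2 t x‖ ≤ K₂ * Real.exp (ω * t) / t ^ 2 * Cf)
    (hint : ∀ x : X, IntegrableOn (fun t => Real.exp (-l * t) * P t f x) (Set.Ioi 0)) :
    ∀ (x : X) (h : H),
      |(∫ t in Set.Ioi (0 : ℝ), Real.exp (-l * t) * P t f (x + 2 • ι h)) -
        2 * (∫ t in Set.Ioi (0 : ℝ), Real.exp (-l * t) * P t f (x + ι h)) +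
        ∫ t in Set.Ioi (0 : ℝ), Real.exp (-l * t) * P t f x| ≤
      (4 + K₂) * ‖h‖ * Cf := by
  intro x h
  rcases eq_or_ne h 0 with h0 | h0
  · subst h0
    simp only [map_zero, smul_zero, add_zero, norm_zero]
    rw [show (∫ t in Set.Ioi (0 : ℝ), Real.exp (-l * t) * P t f x) -
        2 * (∫ t in Set.Ioi (0 : ℝ), Real.exp (-l * t) * P t f x) +
        ∫ t in Set.Ioi (0 : ℝ), Real.exp (-l * t) * P t f x = 0 by ring]
    simp
  set r := ‖h‖ with hr
  have hrpos : 0 < r := norm_pos_iff.mpr h0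
  have hl0 : 0 < l := lt_of_le_of_lt (le_max_right ω 0) hl
  have hωl : ω - l < 0 := sub_neg.mpr (lt_of_le_of_lt (le_max_left ω 0) hl)
  -- translated derivative facts
  have hD1 : ∀ t : ℝ, 0 < t → ∀ (y : X) (τ : ℝ),
      HasDerivAt (fun s : ℝ => P t f (y + s • ι h)) (D1 t (y + τ • ι h) h) τ := by
    intro t ht y τ
    have h1 : HasDerivAt (fun s : ℝ => P t f (y + τ • ι h + s • ι h))
        (D1 t (y + τ • ι h) h) (τ - τ) := by
      rw [sub_self]; exact hd1 t ht (y + τ • ι h) h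
    have h2 := HasDerivAt.comp_sub_const τ τ h1
    have hfun : (fun s : ℝ => P t f (y + τ • ι h + (s - τ) • ι h))
        = fun s : ℝ => P t f (y + s • ι h) := by
      funext s
      congr 1
      rw [sub_smul]; abel
    rwa [hfun] at h2
  have hD2 : ∀ t : ℝ, 0 < t → ∀ (y : X) (τ : ℝ),
      HasDerivAt (fun s : ℝ => D1 t (y + s • ι h) h) (D2 t (y + τ • ι h) h h) τ := by
    intro t ht y τ
    have h1 : HasDerivAt (fun s : ℝ => D1 t (y + τ • ι h + s • ι h) h)
        (D2 t (y + τ • ι h) h h) (τ - τ) := by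
      rw [sub_self]; exact hd2 t ht (y + τ • ι h) h h
    have h2 := HasDerivAt.comp_sub_const τ τ h1
    have hfun : (fun s : ℝ => D1 t (y + τ • ι h + (s - τ) • ι h) h)
        = fun s : ℝ => D1 t (y + s • ι h) h := by
      funext s
      congr 2
      rw [sub_smul]; abel
    rwa [hfun] at h2
  -- second difference bound
  have key : ∀ t : ℝ, 0 < t →
      |P t f (x + 2 • ι h) - 2 * P t f (x + ι h) + P t f x|
        ≤ K₂ * Real.exp (ω * t) / t ^ 2 * Cf * r ^ 2 := by
    intro t ht
    set φ : ℝ → ℝ := fun s => P t f (x + s • ι h) with hφdef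
    set φ' : ℝ → ℝ := fun s => D1 t (x + s • ι h) h with hφ'def
    set φ'' : ℝ → ℝ := fun s => D2 t (x + s • ι h) h h with hφ''def
    have hφ : ∀ s : ℝ, HasDerivAt φ (φ' s) s := fun s => hD1 t ht x s
    have hφ' : ∀ s : ℝ, HasDerivAt φ' (φ'' s) s := fun s => hD2 t ht x s
    set ψ : ℝ → ℝ := fun s => φ (s + 1) - φ s with hψdef
    have hψ : ∀ s : ℝ, HasDerivAt ψ (φ' (s + 1) - φ' s) s := by
      intro s
      have h1 : HasDerivAt (fun u : ℝ => φ (u + 1)) (φ' (s + 1)) s :=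
        HasDerivAt.comp_add_const s 1 (hφ (s + 1))
      exact h1.sub (hφ s)
    obtain ⟨c, _, hc⟩ := exists_hasDerivAt_eq_slope ψ (fun s => φ' (s + 1) - φ' s)
      zero_lt_one
      (fun s _ => ((hψ s).continuousAt).continuousWithinAt)
      (fun s _ => hψ s)
    obtain ⟨d, _, hd⟩ := exists_hasDerivAt_eq_slope φ' φ'' (lt_add_one c)
      (fun s _ => ((hφ' s).continuousAt).continuousWithinAt)
      (fun s _ => hφ' s)
    have hsum : ψ 1 - ψ 0 = φ'' d := by
      rw [hd, hc]; norm_num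
    have hdiff : P t f (x + 2 • ι h) - 2 * P t f (x + ι h) + P t f x = φ'' d := by
      rw [← hsum, hψdef]
      simp only [hφdef]
      norm_num
      rw [show ((2:ℝ) • ι h) = ι h + ι h from two_smul ℝ (ι h),
          show ((2:ℕ) • ι h) = ι h + ι h from two_smul ℕ (ι h)]
      ring
    rw [hdiff]
    have hb1 : |φ'' d| ≤ ‖D2 t (x + d • ι h)‖ * r * r := by
      calc |φ'' d| ≤ ‖D2 t (x + d • ι h) h‖ * ‖h‖ := by
            simpa [Real.norm_eq_abs] using (D2 t (x + d • ι h) h).le_opNorm h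
        _ ≤ ‖D2 t (x + d • ι h)‖ * ‖h‖ * ‖h‖ :=
            mul_le_mul_of_nonneg_right ((D2 t (x + d • ι h)).le_opNorm h) (norm_nonneg h)
        _ = ‖D2 t (x + d • ι h)‖ * r * r := by rw [hr]
    have hb2 := hbound t ht (x + d • ι h)
    calc |φ'' d| ≤ ‖D2 t (x + d • ι h)‖ * r * r := hb1
      _ ≤ K₂ * Real.exp (ω * t) / t ^ 2 * Cf * r * r := by
          apply mul_le_mul_of_nonneg_right _ hrpos.le
          exact mul_le_mul_of_nonneg_right hb2 hrpos.le
      _ = K₂ * Real.exp (ω * t) / t ^ 2 * Cf * r ^ 2 := by ring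
  -- integrability and combining the integrals
  set g : ℝ → ℝ := fun t => Real.exp (-l * t) *
    (P t f (x + 2 • ι h) - 2 * P t f (x + ι h) + P t f x) with hgdef
  have hIA := hint (x + 2 • ι h)
  have hIB := hint (x + ι h)
  have hIC := hint x
  have hg : IntegrableOn g (Ioi 0) := by
    have heq : g = fun t => (Real.exp (-l * t) * P t f (x + 2 • ι h)
        - 2 * (Real.exp (-l * t) * P t f (x + ι h)))
        + Real.exp (-l * t) * P t f x := by
      funext t; simp only [hgdef]; ring
    rw [heq]
    exact (hIA.sub (hIB.const_mul 2)).add hIC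
  have hsplit : (∫ t in Set.Ioi (0 : ℝ), Real.exp (-l * t) * P t f (x + 2 • ι h)) -
        2 * (∫ t in Set.Ioi (0 : ℝ), Real.exp (-l * t) * P t f (x + ι h)) +
        ∫ t in Set.Ioi (0 : ℝ), Real.exp (-l * t) * P t f x
      = ∫ t in Set.Ioi (0 : ℝ), g t := by
    have h1 : (∫ t in Set.Ioi (0:ℝ), g t)
        = ∫ t in Set.Ioi (0:ℝ), (Real.exp (-l * t) * P t f (x + 2 • ι h)
            - 2 * (Real.exp (-l * t) * P t f (x + ι h)))
          + Real.exp (-l * t) * P t f x := by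
      apply setIntegral_congr_fun measurableSet_Ioi
      intro t _
      simp only [hgdef]; ring
    have hAB : IntegrableOn (fun t : ℝ => Real.exp (-l * t) * P t f (x + 2 • ι h)
        - 2 * (Real.exp (-l * t) * P t f (x + ι h))) (Ioi 0) :=
      hIA.sub (hIB.const_mul 2)
    have hB2 : IntegrableOn (fun t : ℝ => 2 * (Real.exp (-l * t) * P t f (x + ι h)))
        (Ioi 0) := hIB.const_mul 2
    rw [h1, integral_add hAB hIC, integral_sub hIA hB2, integral_const_mul]
  rw [hsplit]
  have hg1 : IntegrableOn g (Ioc 0 r) := hg.mono_set Ioc_subset_Ioi_self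
  have hg2 : IntegrableOn g (Ioi r) := hg.mono_set (Ioi_subset_Ioi hrpos.le)
  have hunion : (∫ t in Set.Ioi (0 : ℝ), g t)
      = (∫ t in Ioc 0 r, g t) + ∫ t in Ioi r, g t := by
    rw [← Ioc_union_Ioi_eq_Ioi hrpos.le,
        setIntegral_union (Ioc_disjoint_Ioi le_rfl) measurableSet_Ioi hg1 hg2]
  rw [hunion]
  -- bound on the small-time piece
  have bd1 : |∫ t in Ioc 0 r, g t| ≤ 4 * Cf * r := by
    have := norm_setIntegral_le_of_norm_le_const (μ := volume) (s := Ioc 0 r)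
      (f := g) (C := 4 * Cf)
      (by rw [Real.volume_Ioc]; exact ENNReal.ofReal_lt_top)
      (by
        intro t htm
        have ht : 0 < t := htm.1
        have hA := hcontr t ht (x + 2 • ι h)
        have hB := hcontr t ht (x + ι h)
        have hC := hcontr t ht x
        have habs : |P t f (x + 2 • ι h) - 2 * P t f (x + ι h) + P t f x| ≤ 4 * Cf := by
          rcases abs_le.mp hA with ⟨a1, a2⟩
          rcases abs_le.mp hB with ⟨b1, b2⟩
          rcases abs_le.mp hC with ⟨c1, c2⟩
          rw [abs_le]; constructor <;> linarith
        have hexp : Real.exp (-l * t) ≤ 1 := by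
          apply Real.exp_le_one_iff.mpr
          nlinarith
        calc ‖g t‖ = Real.exp (-l * t) *
              |P t f (x + 2 • ι h) - 2 * P t f (x + ι h) + P t f x| := by
              rw [Real.norm_eq_abs, hgdef, abs_mul, Real.abs_exp]
          _ ≤ 1 * (4 * Cf) := by
              apply mul_le_mul hexp habs (abs_nonneg _) zero_le_one
          _ = 4 * Cf := one_mul _
        )
    rw [Real.volume_real_Ioc, max_eq_left (by linarith)] at this
    calc |∫ t in Ioc 0 r, g t| ≤ 4 * Cf * (r - 0) := this
      _ = 4 * Cf * r := by ring
  -- bound on the large-time piece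
  have hIb : IntegrableOn (fun t : ℝ => K₂ * Cf * r ^ 2 * t ^ (-2 : ℝ)) (Ioi r) :=
    (integrableOn_Ioi_rpow_of_lt (by norm_num) hrpos).const_mul _
  have bd2 : |∫ t in Ioi r, g t| ≤ K₂ * Cf * r := by
    have hptw : ∀ᵐ t ∂(volume.restrict (Ioi r)), ‖g t‖ ≤ K₂ * Cf * r ^ 2 * t ^ (-2 : ℝ) := by
      rw [ae_restrict_iff' measurableSet_Ioi]
      refine ae_of_all _ fun t htm => ?_
      have ht : r < t := htm
      have ht0 : 0 < t := lt_trans hrpos ht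
      have hkey := key t ht0
      have hexp : Real.exp (-l * t) * Real.exp (ω * t) ≤ 1 := by
        rw [← Real.exp_add]
        apply Real.exp_le_one_iff.mpr
        nlinarith
      have hrpow : t ^ (-2 : ℝ) = (t ^ 2)⁻¹ := by
        rw [show (-2 : ℝ) = -(2 : ℕ) by norm_num, Real.rpow_neg ht0.le, Real.rpow_natCast]
      calc ‖g t‖ = Real.exp (-l * t) *
            |P t f (x + 2 • ι h) - 2 * P t f (x + ι h) + P t f x| := by
            rw [Real.norm_eq_abs, hgdef, abs_mul, Real.abs_exp]
        _ ≤ Real.exp (-l * t) * (K₂ * Real.exp (ω * t) / t ^ 2 * Cf * r ^ 2) :=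
            mul_le_mul_of_nonneg_left hkey (Real.exp_nonneg _)
        _ = (Real.exp (-l * t) * Real.exp (ω * t)) * (K₂ * Cf * r ^ 2 * (t ^ 2)⁻¹) := by
            field_simp
        _ ≤ 1 * (K₂ * Cf * r ^ 2 * (t ^ 2)⁻¹) := by
            apply mul_le_mul_of_nonneg_right hexp
            positivity
        _ = K₂ * Cf * r ^ 2 * t ^ (-2 : ℝ) := by rw [one_mul, hrpow]
    have := norm_integral_le_of_norm_le hIb hptw
    rw [Real.norm_eq_abs] at this
    have hval : (∫ t in Ioi r, K₂ * Cf * r ^ 2 * t ^ (-2 : ℝ)) = K₂ * Cf * r := by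
      rw [integral_const_mul, integral_Ioi_rpow_of_lt (by norm_num) hrpos]
      norm_num
      rw [show (-1 : ℝ) = -(1 : ℕ) by norm_num, Real.rpow_neg hrpos.le, Real.rpow_natCast]
      field_simp
    rw [hval] at this
    exact this
  calc |(∫ t in Ioc 0 r, g t) + ∫ t in Ioi r, g t|
      ≤ |∫ t in Ioc 0 r, g t| + |∫ t in Ioi r, g t| := abs_add_le _ _
    _ ≤ 4 * Cf * r + K₂ * Cf * r := add_le_add bd1 bd2
    _ = (4 + K₂) * r * Cf := by ring
end
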